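/- arXiv:2408.10928 — 8 statements merged into one kernel-verified Lean document; each statement's English description precedes it below -/
import Mathlib

section
/- Let R be an associative unital ring and let F• be an unbounded cochain complex of flat left R-modules such that for every unbounded cochain complex P• of projective left R-modules, every morphism of complexes P• → F• is chain homotopic to zero. Then F• is acyclic and all of its cocycle modules are flat. -/
universe u

open CategoryTheory

/-- A left module `M` over a ring `R` is *flat* if it satisfies Villamayor's equational
criterion of flatness; over an arbitrary associative unital ring this is equivalent to
the usual definition of flatness. -/
def Module.IsFlat (R : Type*) [Ring R] (M : Type*) [AddCommGroup M] [Module R M] : Prop :=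
  ∀ (n : ℕ) (r : Fin n → R) (x : Fin n → M), ∑ i, r i • x i = 0 →
    ∃ (m : ℕ) (a : Fin n → Fin m → R) (y : Fin m → M),
      (∀ i, x i = ∑ j, a i j • y j) ∧ ∀ j, ∑ i, r i * a i j = 0

section MultiFlat

variable {R : Type*} [Ring R] {M : Type*} [AddCommGroup M] [Module R M]

lemma Module.IsFlat.multi (hM : Module.IsFlat R M) (k : ℕ) :
    ∀ {m : ℕ} (B : Fin k → Fin m → R) (u : Fin m → M),
      (∀ i, ∑ j, B i j • u j = 0) →
      ∃ (p : ℕ) (C : Fin m → Fin p → R) (w : Fin p → M),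
        (∀ j, u j = ∑ l, C j l • w l) ∧ ∀ i l, ∑ j, B i j * C j l = 0 := by
  induction k with
  | zero =>
    intro m B u _
    refine ⟨m, fun j l => if j = l then 1 else 0, u, fun j => ?_, fun i => i.elim0⟩
    simp [ite_smul]
  | succ k ih =>
    intro m B u hrel
    obtain ⟨m₀, C0, w0, h1, h2⟩ := hM m (B 0) u (hrel 0)
    set B' : Fin k → Fin m₀ → R := fun i l => ∑ j, B i.succ j * C0 j l with hB'
    have hrel' : ∀ i, ∑ l, B' i l • w0 l = 0 := by
      intro i
      have key : ∑ l, B' i l • w0 l = ∑ j, B i.succ j • u j := by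
        simp_rw [hB', Finset.sum_smul, mul_smul]
        rw [Finset.sum_comm]
        exact Finset.sum_congr rfl fun j _ => by rw [h1 j, Finset.smul_sum]
      rw [key, hrel i.succ]
    obtain ⟨p, C', w', h1', h2'⟩ := ih B' w0 hrel'
    refine ⟨p, fun j t => ∑ l, C0 j l * C' l t, w', fun j => ?_, fun i t => ?_⟩
    · have key : ∑ t, (∑ l, C0 j l * C' l t) • w' t = ∑ l, C0 j l • w0 l := by
        simp_rw [Finset.sum_smul, mul_smul]
        rw [Finset.sum_comm]
        exact Finset.sum_congr rfl fun l _ => by rw [h1' l, Finset.smul_sum]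
      rw [key, ← h1 j]
    · refine Fin.cases ?_ (fun i' => ?_) i
      · have key : ∑ j, B 0 j * ∑ l, C0 j l * C' l t
            = ∑ l, (∑ j, B 0 j * C0 j l) * C' l t := by
          simp_rw [Finset.mul_sum, Finset.sum_mul, mul_assoc]
          rw [Finset.sum_comm]
        rw [key]
        simp [h2]
      · have key : ∑ j, B i'.succ j * ∑ l, C0 j l * C' l t = ∑ l, B' i' l * C' l t := by
          simp_rw [Finset.mul_sum, hB', Finset.sum_mul, mul_assoc]
          rw [Finset.sum_comm]
        rw [key]
        exact h2' i' t

end MultiFlat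

namespace NeemanAux

noncomputable section

variable {R : Type u} [Ring R] (F : CochainComplex (ModuleCat.{u} R) ℤ)

def castE {m₁ m₂ : ℤ} (h : m₁ = m₂) (x : F.X m₁) : F.X m₂ := h ▸ x

lemma castE_d {m₁ m₂ : ℤ} (h : m₁ = m₂) (x : F.X m₁) :
    F.d m₂ (m₂ + 1) (castE F h x) = castE F (by rw [h]) (F.d m₁ (m₁ + 1) x) := by
  subst h; rfl

@[simp] lemma castE_refl {m : ℤ} (h : m = m) (x : F.X m) : castE F h x = x := rfl

lemma castE_smul {m₁ m₂ : ℤ} (h : m₁ = m₂) (r : R) (x : F.X m₁) :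
    castE F h (r • x) = r • castE F h x := by subst h; rfl

lemma castE_sum {m₁ m₂ : ℤ} (h : m₁ = m₂) {k : ℕ} (f : Fin k → F.X m₁) :
    castE F h (∑ i, f i) = ∑ i, castE F h (f i) := by subst h; rfl

structure St where
  m : ℤ
  c : ℕ
  c' : ℕ
  A : Fin c → Fin c' → R
  g : Fin c → F.X m
  g' : Fin c' → F.X (m + 1)
  hd : ∀ t, F.d m (m + 1) (g t) = ∑ s, A t s • g' s

lemma exStep (hF : ∀ n : ℤ, Module.IsFlat R (F.X n)) (S : St F) :
    ∃ (c'' : ℕ) (A' : Fin S.c' → Fin c'' → R) (g'' : Fin c'' → F.X (S.m + 1 + 1)),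
      (∀ s, F.d (S.m + 1) (S.m + 1 + 1) (S.g' s) = ∑ l, A' s l • g'' l) ∧
      ∀ t l, ∑ s, S.A t s * A' s l = 0 := by
  have hrel : ∀ t, ∑ s, S.A t s • F.d (S.m + 1) (S.m + 1 + 1) (S.g' s) = 0 := by
    intro t
    have h0 : F.d (S.m + 1) (S.m + 1 + 1) (F.d S.m (S.m + 1) (S.g t)) = 0 := by
      have hdd := F.d_comp_d S.m (S.m + 1) (S.m + 1 + 1)
      calc F.d (S.m + 1) (S.m + 1 + 1) (F.d S.m (S.m + 1) (S.g t))
          = (F.d S.m (S.m + 1) ≫ F.d (S.m + 1) (S.m + 1 + 1)) (S.g t) := rfl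
        _ = 0 := by rw [hdd]; rfl
    have key : ∑ s, S.A t s • F.d (S.m + 1) (S.m + 1 + 1) (S.g' s)
        = F.d (S.m + 1) (S.m + 1 + 1) (∑ s, S.A t s • S.g' s) := by
      rw [map_sum]
      exact Finset.sum_congr rfl fun s _ => (map_smul _ _ _).symm
    rw [key, ← S.hd t, h0]
  obtain ⟨p, C, w, h1, h2⟩ := (hF (S.m + 1 + 1)).multi S.c S.A
    (fun s => F.d (S.m + 1) (S.m + 1 + 1) (S.g' s)) hrel
  exact ⟨p, C, w, h1, h2⟩

variable (hF : ∀ n : ℤ, Module.IsFlat R (F.X n))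

def step (S : St F) : St F where
  m := S.m + 1
  c := S.c'
  c' := (exStep F hF S).choose
  A := (exStep F hF S).choose_spec.choose
  g := S.g'
  g' := (exStep F hF S).choose_spec.choose_spec.choose
  hd := (exStep F hF S).choose_spec.choose_spec.choose_spec.1

lemma step_prod (S : St F) : ∀ t l, ∑ s, S.A t s * (step F hF S).A s l = 0 :=
  (exStep F hF S).choose_spec.choose_spec.choose_spec.2

def T (S₀ : St F) : ℕ → St F
  | 0 => S₀
  | (q + 1) => step F hF (T S₀ q)

variable (S₀ : St F)

lemma T_m (q : ℕ) : (T F hF S₀ q).m = S₀.m + q := by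
  induction q with
  | zero => simp [T]
  | succ q ih =>
    have : (T F hF S₀ (q + 1)).m = (T F hF S₀ q).m + 1 := rfl
    rw [this, ih]
    push_cast
    ring

def cc (m : ℤ) : ℕ := if S₀.m ≤ m then (T F hF S₀ (m - S₀.m).toNat).c else 0

lemma cc_pos {m : ℤ} (h : S₀.m ≤ m) :
    cc F hF S₀ m = (T F hF S₀ (m - S₀.m).toNat).c := if_pos h

lemma cc_neg {m : ℤ} (h : ¬ S₀.m ≤ m) : cc F hF S₀ m = 0 := if_neg h

lemma Tm_eq {m : ℤ} (h : S₀.m ≤ m) : (T F hF S₀ (m - S₀.m).toNat).m = m := by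
  rw [T_m]; omega

lemma cc_pos' {m : ℤ} (h : S₀.m ≤ m) :
    cc F hF S₀ (m + 1) = (T F hF S₀ (m - S₀.m).toNat).c' := by
  have h1 : S₀.m ≤ m + 1 := by omega
  have h2 : (m + 1 - S₀.m).toNat = (m - S₀.m).toNat + 1 := by omega
  rw [cc_pos F hF S₀ h1, h2]
  rfl

def gg (m : ℤ) : Fin (cc F hF S₀ m) → F.X m :=
  if h : S₀.m ≤ m then
    fun t => castE F (Tm_eq F hF S₀ h)
      ((T F hF S₀ (m - S₀.m).toNat).g (Fin.cast (cc_pos F hF S₀ h) t))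
  else fun _ => 0

def AA (m : ℤ) : Fin (cc F hF S₀ m) → Fin (cc F hF S₀ (m + 1)) → R :=
  if h : S₀.m ≤ m then
    fun t s => (T F hF S₀ (m - S₀.m).toNat).A (Fin.cast (cc_pos F hF S₀ h) t)
      (Fin.cast (cc_pos' F hF S₀ h) s)
  else fun _ _ => 0

lemma gg_pos' {m : ℤ} (h : S₀.m ≤ m) {q : ℕ} (hq : (m - S₀.m).toNat = q)
    (e : (T F hF S₀ q).m = m) (ec : cc F hF S₀ m = (T F hF S₀ q).c)
    (t : Fin (cc F hF S₀ m)) :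
    gg F hF S₀ m t = castE F e ((T F hF S₀ q).g (Fin.cast ec t)) := by
  subst hq
  unfold gg
  rw [dif_pos h]

lemma AA_pos' {m : ℤ} (h : S₀.m ≤ m) {q : ℕ} (hq : (m - S₀.m).toNat = q)
    (ec : cc F hF S₀ m = (T F hF S₀ q).c) (ec' : cc F hF S₀ (m + 1) = (T F hF S₀ q).c')
    (t : Fin (cc F hF S₀ m)) (s : Fin (cc F hF S₀ (m + 1))) :
    AA F hF S₀ m t s = (T F hF S₀ q).A (Fin.cast ec t) (Fin.cast ec' s) := by
  subst hq
  unfold AA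
  rw [dif_pos h]

lemma AA_neg {m : ℤ} (h : ¬ S₀.m ≤ m) (t : Fin (cc F hF S₀ m))
    (s : Fin (cc F hF S₀ (m + 1))) : AA F hF S₀ m t s = 0 := by
  unfold AA
  rw [dif_neg h]


lemma key1 (m : ℤ) (t : Fin (cc F hF S₀ m)) :
    F.d m (m + 1) (gg F hF S₀ m t) = ∑ s, AA F hF S₀ m t s • gg F hF S₀ (m + 1) s := by
  by_cases h : S₀.m ≤ m
  · have h1 : S₀.m ≤ m + 1 := by omega
    have h2 : (m + 1 - S₀.m).toNat = (m - S₀.m).toNat + 1 := by omega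
    have ec : cc F hF S₀ m = (T F hF S₀ (m - S₀.m).toNat).c := cc_pos F hF S₀ h
    have ec' : cc F hF S₀ (m + 1) = (T F hF S₀ (m - S₀.m).toNat).c' := cc_pos' F hF S₀ h
    have e : (T F hF S₀ (m - S₀.m).toNat).m = m := Tm_eq F hF S₀ h
    have e' : (T F hF S₀ ((m - S₀.m).toNat + 1)).m = m + 1 := by
      rw [T_m]; push_cast; omega
    have hgg : ∀ s : Fin (cc F hF S₀ (m + 1)),
        gg F hF S₀ (m + 1) s
          = castE F e' ((T F hF S₀ ((m - S₀.m).toNat + 1)).g (Fin.cast ec' s)) :=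
      fun s => gg_pos' F hF S₀ h1 h2 e' ec' s
    rw [gg_pos' F hF S₀ h rfl e ec, castE_d, (T F hF S₀ (m - S₀.m).toNat).hd, castE_sum]
    refine Fintype.sum_equiv (finCongr ec'.symm) _ _ (fun s' => ?_)
    rw [AA_pos' F hF S₀ h rfl ec ec', hgg, castE_smul]
    have hc : Fin.cast ec' (finCongr ec'.symm s') = s' := Fin.ext (by simp)
    rw [hc]
    rfl
  · have h0 := cc_neg F hF S₀ h
    exact absurd t.2 (by omega)

lemma key2 (m : ℤ) (t : Fin (cc F hF S₀ m)) (l : Fin (cc F hF S₀ (m + 1 + 1))) :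
    ∑ s, AA F hF S₀ m t s * AA F hF S₀ (m + 1) s l = 0 := by
  by_cases h : S₀.m ≤ m
  · have h1 : S₀.m ≤ m + 1 := by omega
    have h2 : (m + 1 - S₀.m).toNat = (m - S₀.m).toNat + 1 := by omega
    have ec : cc F hF S₀ m = (T F hF S₀ (m - S₀.m).toNat).c := cc_pos F hF S₀ h
    have ec' : cc F hF S₀ (m + 1) = (T F hF S₀ (m - S₀.m).toNat).c' := cc_pos' F hF S₀ h
    have ec'' : cc F hF S₀ (m + 1 + 1) = (T F hF S₀ ((m - S₀.m).toNat + 1)).c' := by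
      rw [cc_pos' F hF S₀ h1, h2]
    have hA1 : ∀ s, AA F hF S₀ m t s
        = (T F hF S₀ (m - S₀.m).toNat).A (Fin.cast ec t) (Fin.cast ec' s) :=
      fun s => AA_pos' F hF S₀ h rfl ec ec' t s
    have hA2 : ∀ s, AA F hF S₀ (m + 1) s l
        = (T F hF S₀ ((m - S₀.m).toNat + 1)).A (Fin.cast ec' s) (Fin.cast ec'' l) :=
      fun s => AA_pos' F hF S₀ h1 h2 ec' ec'' s l
    calc ∑ s, AA F hF S₀ m t s * AA F hF S₀ (m + 1) s l
        = ∑ s, (T F hF S₀ (m - S₀.m).toNat).A (Fin.cast ec t) (Fin.cast ec' s) *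
            (step F hF (T F hF S₀ (m - S₀.m).toNat)).A (Fin.cast ec' s) (Fin.cast ec'' l) := by
          exact Finset.sum_congr rfl fun s _ => by rw [hA1, hA2]; rfl
      _ = ∑ s', (T F hF S₀ (m - S₀.m).toNat).A (Fin.cast ec t) s' *
            (step F hF (T F hF S₀ (m - S₀.m).toNat)).A s' (Fin.cast ec'' l) := by
          exact Fintype.sum_equiv (finCongr ec') _ _ (fun s => rfl)
      _ = 0 := step_prod F hF _ _ _
  · refine Finset.sum_eq_zero fun s _ => ?_
    rw [AA_neg F hF S₀ h, zero_mul]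


def dLin (m : ℤ) : (Fin (cc F hF S₀ m) → R) →ₗ[R] (Fin (cc F hF S₀ (m + 1)) → R) where
  toFun v := fun s => ∑ t, v t * AA F hF S₀ m t s
  map_add' u v := by
    funext s
    simp [add_mul, Finset.sum_add_distrib]
  map_smul' r v := by
    funext s
    simp [Finset.mul_sum, mul_assoc]

def PC : CochainComplex (ModuleCat.{u} R) ℤ :=
  CochainComplex.of (fun m => ModuleCat.of R (Fin (cc F hF S₀ m) → R))
    (fun m => ModuleCat.ofHom (dLin F hF S₀ m))
    (by
      intro m
      refine ModuleCat.hom_ext (LinearMap.ext fun v => funext fun l => ?_)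
      show ∑ s, (∑ t, v t * AA F hF S₀ m t s) * AA F hF S₀ (m + 1) s l = 0
      simp_rw [Finset.sum_mul, mul_assoc]
      rw [Finset.sum_comm]
      simp_rw [← Finset.mul_sum]
      simp [key2 F hF S₀ m])

def fP : PC F hF S₀ ⟶ F where
  f m := ModuleCat.ofHom (Fintype.linearCombination R (gg F hF S₀ m))
  comm' := by
    rintro i j (rfl : i + 1 = j)
    show ModuleCat.ofHom (Fintype.linearCombination R (gg F hF S₀ i)) ≫ F.d i (i + 1) = _
    rw [show (PC F hF S₀).d i (i + 1) = ModuleCat.ofHom (dLin F hF S₀ i) from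
      CochainComplex.of_d (fun m => ModuleCat.of R (Fin (cc F hF S₀ m) → R)) (fun m => ModuleCat.ofHom (dLin F hF S₀ m)) i]
    refine ModuleCat.hom_ext (LinearMap.ext fun v => ?_)
    show F.d i (i + 1) (∑ t, v t • gg F hF S₀ i t)
      = ∑ s, (∑ t, v t * AA F hF S₀ i t s) • gg F hF S₀ (i + 1) s
    rw [map_sum]
    simp_rw [map_smul, key1 F hF S₀ i, Finset.smul_sum, Finset.sum_smul, mul_smul]
    rw [Finset.sum_comm]


lemma cc_base {n : ℤ} {b : ℕ} (hm : S₀.m = n) (hc : S₀.c = b) : cc F hF S₀ n = b := by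
  subst hm; subst hc
  rw [cc_pos F hF S₀ le_rfl]
  have h0 : (S₀.m - S₀.m).toNat = 0 := by omega
  rw [h0]
  rfl

lemma cc_base' {n : ℤ} {a : ℕ} (hm : S₀.m = n) (hc : S₀.c' = a) :
    cc F hF S₀ (n + 1) = a := by
  subst hm; subst hc
  rw [cc_pos' F hF S₀ le_rfl]
  have h0 : (S₀.m - S₀.m).toNat = 0 := by omega
  rw [h0]
  rfl

lemma gg_base {n : ℤ} (hm : S₀.m = n) (ec : cc F hF S₀ n = S₀.c)
    (t : Fin (cc F hF S₀ n)) :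
    gg F hF S₀ n t = castE F hm (S₀.g (Fin.cast ec t)) := by
  subst hm
  exact gg_pos' F hF S₀ le_rfl (q := 0) (by omega) rfl ec t

lemma AA_base {n : ℤ} (hm : S₀.m = n) (ec : cc F hF S₀ n = S₀.c)
    (ec' : cc F hF S₀ (n + 1) = S₀.c') (t : Fin (cc F hF S₀ n))
    (s : Fin (cc F hF S₀ (n + 1))) :
    AA F hF S₀ n t s = S₀.A (Fin.cast ec t) (Fin.cast ec' s) := by
  subst hm
  exact AA_pos' F hF S₀ le_rfl (q := 0) (by omega) ec ec' t s

lemma main (hF : ∀ n : ℤ, Module.IsFlat R (F.X n)) {n : ℤ} {b a : ℕ} (A : Fin b → Fin a → R) (x : Fin b → F.X n)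
    (y : Fin a → F.X (n + 1))
    (hxy : ∀ t, F.d n (n + 1) (x t) = ∑ s, A t s • y s)
    (hh : ∀ (P : CochainComplex (ModuleCat.{u} R) ℤ),
      (∀ k : ℤ, Module.Projective R (P.X k)) → ∀ f : P ⟶ F, Nonempty (Homotopy f 0)) :
    ∃ (v : Fin a → F.X n) (z : Fin b → F.X (n - 1)),
      ∀ t, x t = ∑ s, A t s • v s + F.d (n - 1) n (z t) := by
  set S₀ : St F := ⟨n, b, a, A, x, y, hxy⟩ with hS₀
  obtain ⟨ht⟩ := hh (PC F hF S₀)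
    (fun k => inferInstanceAs (Module.Projective R (Fin (cc F hF S₀ k) → R)))
    (fP F hF S₀)
  have hcomm : (fP F hF S₀).f n
      = (PC F hF S₀).d n (n + 1) ≫ ht.hom (n + 1) n + ht.hom n (n - 1) ≫ F.d (n - 1) n := by
    have hc := ht.comm n
    rw [dNext_eq ht.hom (show (ComplexShape.up ℤ).Rel n (n + 1) by simp),
        prevD_eq ht.hom (show (ComplexShape.up ℤ).Rel (n - 1) n by simp)] at hc
    simpa using hc
  have e0 : cc F hF S₀ n = b := cc_base F hF S₀ rfl rfl
  have e1 : cc F hF S₀ (n + 1) = a := cc_base' F hF S₀ rfl rfl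
  refine ⟨fun j => ht.hom (n + 1) n (Pi.single (Fin.cast e1.symm j) (1 : R)),
    fun t => ht.hom n (n - 1) (Pi.single (Fin.cast e0.symm t) (1 : R)), fun t => ?_⟩
  set t₁ : Fin (cc F hF S₀ n) := Fin.cast e0.symm t with ht₁
  have happ : (fP F hF S₀).f n (Pi.single t₁ (1 : R))
      = ht.hom (n + 1) n ((PC F hF S₀).d n (n + 1) (Pi.single t₁ (1 : R)))
        + F.d (n - 1) n (ht.hom n (n - 1) (Pi.single t₁ (1 : R))) := by
    rw [hcomm]; rfl
  have hcast : Fin.cast e0 t₁ = t := Fin.ext (by simp [ht₁])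
  have lhs_eq : (fP F hF S₀).f n (Pi.single t₁ (1 : R)) = x t := by
    show Fintype.linearCombination R (gg F hF S₀ n) (Pi.single t₁ (1 : R)) = x t
    rw [Fintype.linearCombination_apply_single, one_smul, gg_base F hF S₀ rfl e0 t₁]
    show x (Fin.cast e0 t₁) = x t
    rw [hcast]
  have d_eq : (PC F hF S₀).d n (n + 1) (Pi.single t₁ (1 : R))
      = ∑ s0, AA F hF S₀ n t₁ s0 • (Pi.single s0 (1 : R) : Fin (cc F hF S₀ (n + 1)) → R) := by
    rw [show (PC F hF S₀).d n (n + 1) = ModuleCat.ofHom (dLin F hF S₀ n) from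
      CochainComplex.of_d (fun m => ModuleCat.of R (Fin (cc F hF S₀ m) → R)) (fun m => ModuleCat.ofHom (dLin F hF S₀ m)) n]
    show (fun s => ∑ t', (Pi.single t₁ (1 : R) : Fin (cc F hF S₀ n) → R) t' * AA F hF S₀ n t' s) = _
    funext l
    rw [Finset.sum_apply]
    simp [Pi.single_apply, ite_mul]
  have rhs1_eq : ht.hom (n + 1) n ((PC F hF S₀).d n (n + 1) (Pi.single t₁ (1 : R)))
      = ∑ s, A t s • ht.hom (n + 1) n (Pi.single (Fin.cast e1.symm s) (1 : R)) := by
    rw [d_eq]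
    erw [map_sum]
    refine Fintype.sum_equiv (finCongr e1) _ _ (fun s0 => ?_)
    erw [map_smul]
    rw [AA_base F hF S₀ rfl e0 e1 t₁ s0]
    have h2 : Fin.cast e1.symm (finCongr e1 s0) = s0 := Fin.ext (by simp)
    rw [h2, hcast]
    rfl
  rw [lhs_eq, rhs1_eq] at happ
  exact happ

end

end NeemanAux

/-- (Neeman, (i) ⟹ (ii)) Let `F•` be an unbounded complex of flat left `R`-modules such
that every morphism of complexes `P• → F•` from a complex of projective `R`-modules is
chain homotopic to zero.  Then `F•` is acyclic and all of its cocycle modules are flat. -/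
theorem pure_acyclic_of_homotopic_to_zero
    {R : Type u} [Ring R] (F : CochainComplex (ModuleCat.{u} R) ℤ)
    (hFflat : ∀ n : ℤ, Module.IsFlat R (F.X n))
    (h : ∀ (P : CochainComplex (ModuleCat.{u} R) ℤ),
      (∀ n : ℤ, Module.Projective R (P.X n)) → ∀ f : P ⟶ F, Nonempty (Homotopy f 0)) :
    (∀ n : ℤ, F.ExactAt n) ∧
      ∀ n : ℤ, Module.IsFlat R (LinearMap.ker (F.d n (n + 1)).hom) := by
  constructor
  · intro n
    rw [F.exactAt_iff' (n - 1) n (n + 1) (by simp) (by simp),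
      ShortComplex.moduleCat_exact_iff]
    intro u hu
    obtain ⟨v, z, hz⟩ := NeemanAux.main F hFflat (n := n) (b := 1) (a := 0)
      (fun _ s => s.elim0) (fun _ => u) (fun s => s.elim0)
      (fun t => by simp only [Finset.univ_eq_empty, Finset.sum_empty]; exact hu) h
    refine ⟨z 0, ?_⟩
    have := hz 0
    simp only [Finset.univ_eq_empty, Finset.sum_empty, zero_add] at this
    exact this.symm
  · intro n k r xk hrel
    have hrel' : ∑ i, r i • ((xk i : F.X n)) = 0 := by
      have h2 := congrArg
        (fun w : LinearMap.ker (F.d n (n + 1)).hom => (w : F.X n)) hrel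
      simpa using h2
    obtain ⟨m₀, B, u, hu1, hu2⟩ := hFflat n k r (fun i => (xk i : F.X n)) hrel'
    have hdz : ∀ i, ∑ j, B i j • F.d n (n + 1) (u j) = 0 := by
      intro i
      have hxker : F.d n (n + 1) ((xk i : F.X n)) = 0 := (xk i).2
      calc ∑ j, B i j • F.d n (n + 1) (u j)
          = F.d n (n + 1) (∑ j, B i j • u j) := by
            rw [map_sum]
            exact Finset.sum_congr rfl fun j _ => (map_smul _ _ _).symm
        _ = 0 := by rw [← hu1 i, hxker]
    obtain ⟨p, C, w, hw1, hw2⟩ :=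
      (hFflat (n + 1)).multi k B (fun j => F.d n (n + 1) (u j)) hdz
    obtain ⟨v, z, hvz⟩ := NeemanAux.main F hFflat C u w hw1 h
    have hmem : ∀ j, F.d (n - 1) n (z j) ∈ LinearMap.ker (F.d n (n + 1)).hom := by
      intro j
      have hzz : (F.d (n - 1) n ≫ F.d n (n + 1)) (z j) = 0 := by
        rw [F.d_comp_d]; rfl
      exact LinearMap.mem_ker.mpr hzz
    refine ⟨m₀, B, fun j => ⟨F.d (n - 1) n (z j), hmem j⟩, fun i => ?_, hu2⟩
    apply Subtype.ext
    have hcoe : ((∑ j, B i j • (⟨F.d (n - 1) n (z j), hmem j⟩ :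
        LinearMap.ker (F.d n (n + 1)).hom) : LinearMap.ker (F.d n (n + 1)).hom) : F.X n)
        = ∑ j, B i j • F.d (n - 1) n (z j) := by
      push_cast
      rfl
    rw [hcoe]
    have hfst : ∑ j, B i j • (∑ l, C j l • v l) = 0 := by
      have swap : ∑ j, B i j • (∑ l, C j l • v l)
          = ∑ l, (∑ j, B i j * C j l) • v l := by
        simp_rw [Finset.smul_sum, smul_smul, Finset.sum_smul]
        rw [Finset.sum_comm]
      rw [swap]
      simp [hw2 i]
    calc (xk i : F.X n) = ∑ j, B i j • u j := hu1 i
      _ = ∑ j, B i j • ((∑ l, C j l • v l) + F.d (n - 1) n (z j)) :=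
          Finset.sum_congr rfl fun j _ => by rw [← hvz j]
      _ = ∑ j, B i j • (∑ l, C j l • v l) + ∑ j, B i j • F.d (n - 1) n (z j) := by
          simp_rw [smul_add]
          rw [Finset.sum_add_distrib]
      _ = ∑ j, B i j • F.d (n - 1) n (z j) := by rw [hfst, zero_add]
end

section
/- Let R be an associative unital ring. Let G be a left R-module that is a quotient (epimorphic image) of some cotorsion left R-module, and let H be a flat left R-module admitting a short exact sequence 0 → P₁ → P₀ → H → 0 with P₀ and P₁ projective. Then Ext^1_R(H, G) = 0. -/
universe u

open CategoryTheory CategoryTheory.Limits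


/-- The `n`-th Ext group of two left `R`-modules, as an abelian group
(computed in the abelian category `ModuleCat R` by deriving the Hom functor). -/
def ModuleCat.extGroup {R : Type u} [Ring R] (F C : ModuleCat.{u} R) (n : ℕ) : Type u :=
  ((Ext ℤ (ModuleCat.{u} R) n).obj (Opposite.op F)).obj C

/-- A left `R`-module `C` is *cotorsion* if `Ext¹_R(F, C) = 0` for every flat left
`R`-module `F`. -/
def ModuleCat.IsCotorsion {R : Type u} [Ring R] (C : ModuleCat.{u} R) : Prop :=
  ∀ F : ModuleCat.{u} R, Module.IsFlat R F → Subsingleton (F.extGroup C 1)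



namespace ExtAux

variable {R : Type u} [Ring R] {P₀ P₁ H : ModuleCat.{u} R} (i : P₁ ⟶ P₀) (p : P₀ ⟶ H)

/-- The two-term chain complex `… → 0 → P₁ → P₀`. -/
noncomputable def cx : ChainComplex (ModuleCat.{u} R) ℕ :=
  ChainComplex.of
    (fun n => match n with
      | 0 => P₀
      | 1 => P₁
      | _ => ModuleCat.of R PUnit)
    (fun n => match n with
      | 0 => i
      | _ => 0)
    (fun n => match n with
      | 0 => zero_comp
      | _ + 1 => zero_comp)

lemma cx_d_1_0 : (cx i).d 1 0 = i := by simp [cx]; exact ChainComplex.of_d _ _ 0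
lemma cx_d_2_1 : (cx i).d 2 1 = 0 := by simp [cx]; exact ChainComplex.of_d _ _ 1

lemma isZero_cx_X (n : ℕ) : IsZero ((cx i).X (n + 2)) :=
  ModuleCat.isZero_of_subsingleton (ModuleCat.of R PUnit)

variable (h₀ : Module.Projective R P₀) (h₁ : Module.Projective R P₁)
  (hinj : Function.Injective i) (hp : Function.Surjective p) (hexact : Function.Exact i p)

lemma i_comp_p (hexact : Function.Exact i p) : i ≫ p = 0 := by
  ext x
  exact (hexact (i x)).mpr ⟨x, rfl⟩

/-- The projective resolution of `H` given by `0 → P₁ → P₀ → H → 0`. -/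
noncomputable def res : ProjectiveResolution H where
  complex := cx i
  projective n := match n with
    | 0 => (IsProjective.iff_projective P₀).mp h₀
    | 1 => (IsProjective.iff_projective P₁).mp h₁
    | (n + 2) => (IsProjective.iff_projective PUnit.{u+1}).mp
        (inferInstance : Module.Projective R PUnit.{u+1})
  π := (ChainComplex.toSingle₀Equiv _ _).symm
    ⟨p, by rw [cx_d_1_0]; exact i_comp_p i p hexact⟩
  quasiIso := ⟨fun n => by
    cases n with
    | zero =>
      rw [ChainComplex.quasiIsoAt₀_iff, ShortComplex.quasiIso_iff_of_zeros']
      · refine (ShortComplex.exact_and_epi_g_iff_of_iso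
          (ShortComplex.isoMk (Iso.refl _) (Iso.refl _) (Iso.refl _)
            (by simp [cx_d_1_0]) (by simp) :
              _ ≅ ShortComplex.mk i p (i_comp_p i p hexact))).2
          ⟨(ShortComplex.moduleCat_exact_iff _).mpr ?_,
            (ModuleCat.epi_iff_surjective p).mpr hp⟩
        intro x hx
        exact (hexact x).mp hx
      all_goals rfl
    | succ n =>
      rw [quasiIsoAt_iff_exactAt']
      · cases n with
        | zero =>
          rw [HomologicalComplex.exactAt_iff' _ 2 1 0 (by simp) (by simp),
            ShortComplex.exact_iff_mono _ (cx_d_2_1 i)]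
          have h : ((cx i).sc' 2 1 0).g = i := cx_d_1_0 i
          rw [h]
          exact (ModuleCat.mono_iff_injective i).mpr hinj
        | succ m =>
          rw [HomologicalComplex.exactAt_iff]
          exact ShortComplex.exact_of_isZero_X₂ _ (isZero_cx_X i m)
      · apply ChainComplex.exactAt_succ_single_obj⟩

lemma moduleCat_isZero_iff {S : Type*} [Ring S] {N : ModuleCat S} :
    IsZero N ↔ Subsingleton N := by
  constructor
  · intro h
    have h1 : (𝟙 N : N ⟶ N) = 0 := h.eq_of_src _ _
    have h2 : ∀ x : N, x = 0 := fun x => by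
      conv_lhs => rw [show x = (𝟙 N : N ⟶ N) x from rfl, h1]
      rfl
    exact ⟨fun a b => by rw [h2 a, h2 b]⟩
  · intro h
    exact ModuleCat.isZero_of_subsingleton N

variable (h₀ : Module.Projective R P₀) (h₁ : Module.Projective R P₁)

lemma subsingleton_ext_iff (h₀ : Module.Projective R P₀) (h₁ : Module.Projective R P₁)
    (hinj : Function.Injective i) (hp : Function.Surjective p) (hexact : Function.Exact i p) (M : ModuleCat.{u} R) :
    Subsingleton (((Ext ℤ (ModuleCat.{u} R) 1).obj (Opposite.op H)).obj M) ↔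
      ∀ f : P₁ ⟶ M, ∃ g : P₀ ⟶ M, i ≫ g = f := by
  have e := (res i p h₀ h₁ hinj hp hexact).isoExt (R := ℤ) 1 M
  rw [show (res i p h₀ h₁ hinj hp hexact).complex = cx i from rfl] at e
  have hd01 : ∀ g : ((cx i).X 0 ⟶ M), (((cx i).linearYonedaObj ℤ M).d 0 1) g = i ≫ g := by
    intro g
    have h : ((cx i).linearYonedaObj ℤ M).d 0 1 = ModuleCat.ofHom (Linear.leftComp ℤ M ((cx i).d 1 0)) :=
      ChainComplex.linearYonedaObj_d _ _ _ _ _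
    rw [h]
    show (cx i).d 1 0 ≫ g = i ≫ g
    rw [cx_d_1_0]
    rfl
  have hg : (((cx i).linearYonedaObj ℤ M).sc' 0 1 2).g = 0 := by
    show ((cx i).linearYonedaObj ℤ M).d 1 2 = 0
    have h : ((cx i).linearYonedaObj ℤ M).d 1 2 = ModuleCat.ofHom (Linear.leftComp ℤ M ((cx i).d 2 1)) :=
      ChainComplex.linearYonedaObj_d _ _ _ _ _
    rw [h, cx_d_2_1]
    ext g : 2
    show (0 : (cx i).X 2 ⟶ (cx i).X 1) ≫ g = 0
    simp
  rw [← moduleCat_isZero_iff, e.isZero_iff,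
    ← HomologicalComplex.exactAt_iff_isZero_homology,
    HomologicalComplex.exactAt_iff' _ 0 1 2 (by simp) (by simp),
    ShortComplex.exact_iff_epi _ hg,
    ModuleCat.epi_iff_surjective]
  constructor
  · intro h f
    obtain ⟨g, hgf⟩ := h f
    exact ⟨g, (hd01 g).symm.trans hgf⟩
  · intro h f
    obtain ⟨g, hgf⟩ := h f
    exact ⟨g, (hd01 g).trans hgf⟩

end ExtAux

/-- Let `G` be a left `R`-module that is a quotient of a cotorsion module, and let `H`
be a flat left `R`-module of projective dimension at most `1` (i.e. admitting a short
exact sequence `0 → P₁ → P₀ → H → 0` with `P₀, P₁` projective).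
Then `Ext¹_R(H, G) = 0`. -/
theorem ext_one_vanishing_of_quotient_of_cotorsion
    {R : Type u} [Ring R] (G H : ModuleCat.{u} R)
    (hG : ∃ (C : ModuleCat.{u} R) (π : C ⟶ G), C.IsCotorsion ∧ Function.Surjective π)
    (hH : Module.IsFlat R H)
    (hpd : ∃ (P₀ P₁ : ModuleCat.{u} R) (i : P₁ ⟶ P₀) (p : P₀ ⟶ H),
      Module.Projective R P₀ ∧ Module.Projective R P₁ ∧
        Function.Injective i ∧ Function.Surjective p ∧ Function.Exact i p) :
    Subsingleton (H.extGroup G 1) := by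
  obtain ⟨C, π, hC, hπ⟩ := hG
  obtain ⟨P₀, P₁, i, p, h₀, h₁, hinj, hp, hexact⟩ := hpd
  refine (ExtAux.subsingleton_ext_iff i p h₀ h₁ hinj hp hexact G).mpr ?_
  intro f
  have hCsub : Subsingleton (((Ext ℤ (ModuleCat.{u} R) 1).obj (Opposite.op H)).obj C) := hC H hH
  have hlift := (ExtAux.subsingleton_ext_iff i p h₀ h₁ hinj hp hexact C).mp hCsub
  have hepi : Epi π := (ModuleCat.epi_iff_surjective π).mpr hπ
  have : Projective P₁ := (IsProjective.iff_projective P₁).mp h₁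
  obtain ⟨g, hgl⟩ := hlift (Projective.factorThru f π)
  exact ⟨g ≫ π, by rw [← CategoryTheory.Category.assoc, hgl, Projective.factorThru_comp]⟩
end

section
/- Let B be an abelian category with enough projective objects, and let 𝒻 be a class of objects of B such that (1) every object of B admits an epimorphism from an object of 𝒻 and (2) for every short exact sequence 0 → K → G → F → 0 in B with G ∈ 𝒻 and F ∈ 𝒻, one has K ∈ 𝒻. Let X be an object of B such that Ext^1_B(F, X) = 0 for all F ∈ 𝒻. Then Ext^n_B(F, X) = 0 for all F ∈ 𝒻 and all n ≥ 1. -/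
universe v u

open CategoryTheory

/-- The `n`-th Ext group of two objects of an abelian category `B` with enough
projectives (computed by deriving the Hom functor). -/
def extGroup {B : Type u} [Category.{v} B] [Abelian B] [EnoughProjectives B]
    (X Y : B) (n : ℕ) : Type v :=
  ((Ext ℤ B n).obj (Opposite.op X)).obj Y

noncomputable section AuxExtVanish

open CategoryTheory Category Limits HomologicalComplex

namespace AuxExtVanish

variable {B : Type u} [Category.{v} B] [Abelian B] [EnoughProjectives B]

section Splice

variable (S : ShortComplex B) (Q : ProjectiveResolution S.X₁)

/-- The chain complex obtained by splicing a projective resolution of `S.X₁`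
on top of `S.X₂`. -/
def splicedComplex : ChainComplex B ℕ :=
  ChainComplex.of
    (fun k => match k with
      | 0 => S.X₂
      | (k + 1) => Q.complex.X k)
    (fun n => match n with
      | 0 => (Q.π.f 0 ≫ S.f : Q.complex.X 0 ⟶ S.X₂)
      | (n + 1) => Q.complex.d (n + 1) n)
    (fun n => match n with
      | 0 => by exact (Category.assoc _ _ _).symm.trans ((congrArg (· ≫ S.f) Q.complex_d_comp_π_f_zero).trans zero_comp)
      | (n + 1) => by
          match n with
          | 0 => simp
          | (n + 1) => simp)

@[simp] lemma splicedComplex_X_zero : (splicedComplex S Q).X 0 = S.X₂ := rfl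

@[simp] lemma splicedComplex_X_succ (n : ℕ) :
    (splicedComplex S Q).X (n + 1) = Q.complex.X n := rfl

@[simp] lemma splicedComplex_d_one_zero :
    (splicedComplex S Q).d 1 0 = Q.π.f 0 ≫ S.f :=
  by simp [splicedComplex, ChainComplex.of.d]

@[simp] lemma splicedComplex_d_succ (n : ℕ) :
    (splicedComplex S Q).d (n + 2) (n + 1) = Q.complex.d (n + 1) n :=
  by simp [splicedComplex, ChainComplex.of.d]

/-- The augmentation of the spliced complex. -/
def splicedπ : splicedComplex S Q ⟶ (ChainComplex.single₀ B).obj S.X₃ :=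
  (ChainComplex.toSingle₀Equiv _ _).symm
    ⟨(S.g : (splicedComplex S Q).X 0 ⟶ S.X₃), by
      rw [splicedComplex_d_one_zero]; exact (Category.assoc _ _ _).trans ((congrArg (Q.π.f 0 ≫ ·) S.zero).trans comp_zero)⟩

@[simp] lemma splicedπ_f_zero : (splicedπ S Q).f 0 = S.g :=
  ChainComplex.toSingle₀Equiv_symm_apply_f_zero _ _

variable (hS : S.ShortExact) [Projective S.X₂]

/-- The spliced complex is a projective resolution of `S.X₃`. -/
def splicedResolution : ProjectiveResolution S.X₃ where
  complex := splicedComplex S Q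
  projective n := by
    match n with
    | 0 => exact (inferInstance : Projective S.X₂)
    | (n + 1) => exact Q.projective n
  π := splicedπ S Q
  quasiIso := ⟨fun n => by
    cases n with
    | zero =>
      rw [ChainComplex.quasiIsoAt₀_iff, ShortComplex.quasiIso_iff_of_zeros' _ rfl rfl rfl]
      · have hw : (Q.π.f 0 ≫ S.f) ≫ S.g = 0 := by exact (Category.assoc _ _ _).trans ((congrArg (Q.π.f 0 ≫ ·) S.zero).trans comp_zero)
        refine (ShortComplex.exact_and_epi_g_iff_of_iso
          (S₂ := ShortComplex.mk (Q.π.f 0 ≫ S.f) S.g hw) ?_).2 ⟨?_, ?_⟩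
        · exact ShortComplex.isoMk (Iso.refl _) (Iso.refl _) (Iso.refl _)
            (by simp [shortComplexFunctor'])
            (by simp [shortComplexFunctor'])
        · let φ : ShortComplex.mk (Q.π.f 0 ≫ S.f) S.g hw ⟶ S :=
            { τ₁ := Q.π.f 0
              τ₂ := 𝟙 _
              τ₃ := 𝟙 _ }
          have : Epi φ.τ₁ := by dsimp [φ]; exact (inferInstance : Epi (Q.π.f 0))
          have : IsIso φ.τ₂ := by dsimp [φ]; infer_instance
          have : Mono φ.τ₃ := by dsimp [φ]; infer_instance
          rw [ShortComplex.exact_iff_of_epi_of_isIso_of_mono φ]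
          exact hS.exact
        · exact hS.epi_g
    | succ n =>
      rw [quasiIsoAt_iff_exactAt']
      · rw [HomologicalComplex.exactAt_iff' _ (n + 2) (n + 1) n (by simp) (by simp)]
        dsimp [HomologicalComplex.sc', shortComplexFunctor']
        match n with
        | 0 =>
          have heq : (splicedComplex S Q).d (0 + 1) 0 = Q.π.f 0 ≫ S.f :=
            splicedComplex_d_one_zero S Q
          simp only [splicedComplex_d_succ, heq]
          have hmono : Mono S.f := hS.mono_f
          let φ : ShortComplex.mk (Q.complex.d 1 0) (Q.π.f 0)
              Q.complex_d_comp_π_f_zero ⟶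
              ShortComplex.mk (Q.complex.d 1 0) (Q.π.f 0 ≫ S.f)
                (by exact (Category.assoc _ _ _).symm.trans ((congrArg (· ≫ S.f) Q.complex_d_comp_π_f_zero).trans zero_comp)) :=
            { τ₁ := 𝟙 _
              τ₂ := 𝟙 _
              τ₃ := S.f }
          have : Epi φ.τ₁ := by dsimp [φ]; infer_instance
          have : IsIso φ.τ₂ := by dsimp [φ]; infer_instance
          have : Mono φ.τ₃ := by dsimp [φ]; infer_instance
          exact (ShortComplex.exact_iff_of_epi_of_isIso_of_mono φ).1 Q.exact₀
        | (n + 1) =>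
          simp only [splicedComplex_d_succ]
          exact Q.exact_succ n
      · apply ChainComplex.exactAt_succ_single_obj⟩

@[simp] lemma splicedResolution_complex :
    (splicedResolution S Q hS).complex = splicedComplex S Q := rfl

end Splice

lemma subsingleton_of_moduleIso {M N : ModuleCat.{v} ℤ} (e : M ≅ N)
    (h : Subsingleton N) : Subsingleton M :=
  haveI : Subsingleton ((CategoryTheory.forget (ModuleCat ℤ)).obj N) := h
  Equiv.subsingleton ((CategoryTheory.forget (ModuleCat ℤ)).mapIso e).toEquiv

/-- Dimension shifting along a short exact sequence with projective middle term. -/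
lemma dimShift (S : ShortComplex B) (hS : S.ShortExact) [Projective S.X₂] (X : B) (m : ℕ)
    (h : Subsingleton (extGroup S.X₁ X (m + 1))) :
    Subsingleton (extGroup S.X₃ X (m + 2)) := by
  let Q : ProjectiveResolution S.X₁ := ProjectiveResolution.of S.X₁
  let R : ProjectiveResolution S.X₃ := splicedResolution S Q hS
  have e₁ : ((Ext ℤ B (m + 2)).obj (Opposite.op S.X₃)).obj X ≅
      (R.complex.linearYonedaObj ℤ X).homology (m + 2) := R.isoExt (m + 2) X
  have e₂ : ((Ext ℤ B (m + 1)).obj (Opposite.op S.X₁)).obj X ≅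
      (Q.complex.linearYonedaObj ℤ X).homology (m + 1) := Q.isoExt (m + 1) X
  have e₃ := (R.complex.linearYonedaObj ℤ X).homologyIsoSc' (m + 1) (m + 2) (m + 3)
    ((ComplexShape.up ℕ).prev_eq' (by simp)) ((ComplexShape.up ℕ).next_eq' (by simp))
  have e₄ := (Q.complex.linearYonedaObj ℤ X).homologyIsoSc' m (m + 1) (m + 2)
    ((ComplexShape.up ℕ).prev_eq' (by simp)) ((ComplexShape.up ℕ).next_eq' (by simp))
  have e₅ : (R.complex.linearYonedaObj ℤ X).sc' (m + 1) (m + 2) (m + 3) ≅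
      (Q.complex.linearYonedaObj ℤ X).sc' m (m + 1) (m + 2) :=
    ShortComplex.isoMk (Iso.refl _) (Iso.refl _) (Iso.refl _)
      (by
        dsimp [R, splicedResolution, HomologicalComplex.shortComplexFunctor']
        simp
        exact (Category.id_comp _).trans (Category.comp_id _).symm)
      (by
        dsimp [R, splicedResolution, HomologicalComplex.shortComplexFunctor']
        simp
        exact (Category.id_comp _).trans (Category.comp_id _).symm)
  exact subsingleton_of_moduleIso
    (e₁ ≪≫ e₃ ≪≫ ShortComplex.homologyMapIso e₅ ≪≫ e₄.symm ≪≫ e₂.symm) h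

/-- Ext groups vanish along retracts. -/
lemma subsingleton_ext_of_retract {A K : B} (a : A ⟶ K) (b : K ⟶ A)
    (hab : a ≫ b = 𝟙 A) (X : B) (n : ℕ)
    (h : Subsingleton (extGroup K X n)) : Subsingleton (extGroup A X n) := by
  have hcomp : (Ext ℤ B n).map b.op ≫ (Ext ℤ B n).map a.op = 𝟙 _ := by
    rw [← CategoryTheory.Functor.map_comp, ← op_comp, hab, op_id, CategoryTheory.Functor.map_id]
  constructor
  intro x y
  have hx : ∀ z : ((Ext ℤ B n).obj (Opposite.op A)).obj X,
      (((Ext ℤ B n).map a.op).app X) ((((Ext ℤ B n).map b.op).app X) z) = z := by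
    intro z
    have h2 : (((Ext ℤ B n).map b.op ≫ (Ext ℤ B n).map a.op).app X) z =
        ((NatTrans.app (𝟙 ((Ext ℤ B n).obj (Opposite.op A))) X) z) := by rw [hcomp]
    simpa using h2
  have hK : Subsingleton (((Ext ℤ B n).obj (Opposite.op K)).obj X) := h
  exact (hx x).symm.trans ((congrArg (fun t => (((Ext ℤ B n).map a.op).app X) t)
    (Subsingleton.elim ((((Ext ℤ B n).map b.op).app X) x)
      ((((Ext ℤ B n).map b.op).app X) y))).trans (hx y))

end AuxExtVanish

end AuxExtVanish


open AuxExtVanish Limits CategoryTheory.Category in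
/-- Let `B` be an abelian category with enough projectives and let `𝓕` be a class of
objects of `B` which is generating (every object admits an epimorphism from an object
of `𝓕`) and closed under kernels of epimorphisms between its members.  If
`Ext¹(F, X) = 0` for all `F ∈ 𝓕`, then `Extⁿ(F, X) = 0` for all `F ∈ 𝓕` and `n ≥ 1`. -/
theorem ext_vanishing_of_generating_closed_under_kernels
    {B : Type u} [Category.{v} B] [Abelian B] [EnoughProjectives B]
    (𝓕 : Set B)
    (hgen : ∀ X : B, ∃ (F : B) (π : F ⟶ X), F ∈ 𝓕 ∧ Epi π)
    (hker : ∀ S : ShortComplex B, S.ShortExact → S.X₂ ∈ 𝓕 → S.X₃ ∈ 𝓕 → S.X₁ ∈ 𝓕)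
    (X : B) (hX : ∀ F ∈ 𝓕, Subsingleton (extGroup F X 1)) :
    ∀ F ∈ 𝓕, ∀ n : ℕ, 1 ≤ n → Subsingleton (extGroup F X n) := by
  have key : ∀ n : ℕ, ∀ F, F ∈ 𝓕 → Subsingleton (extGroup F X (n + 1)) := by
    intro n
    induction n with
    | zero => exact fun F hF => hX F hF
    | succ m ih =>
      intro F hF
      let P : B := Projective.over F
      let p : P ⟶ F := Projective.π F
      let S₀ : ShortComplex B := ShortComplex.mk (kernel.ι p) p (kernel.condition p)
      have hS₀ : S₀.ShortExact :=
        { exact := ShortComplex.exact_of_f_is_kernel _ (kernelIsKernel p)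
          mono_f := inferInstance
          epi_g := inferInstance }
      obtain ⟨G, g, hG, hg⟩ := hgen P
      haveI := hg
      let s : P ⟶ G := Projective.factorThru (𝟙 P) g
      have hs : s ≫ g = 𝟙 P := Projective.factorThru_comp _ _
      let q : G ⟶ F := g ≫ p
      haveI : Epi q := epi_comp g p
      let S₁ : ShortComplex B := ShortComplex.mk (kernel.ι q) q (kernel.condition q)
      have hS₁ : S₁.ShortExact :=
        { exact := ShortComplex.exact_of_f_is_kernel _ (kernelIsKernel q)
          mono_f := inferInstance
          epi_g := inferInstance }
      have hK' : kernel q ∈ 𝓕 := hker S₁ hS₁ hG hF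
      let a : kernel p ⟶ kernel q := kernel.lift q (kernel.ι p ≫ s)
        (by simp [q, reassoc_of% hs])
      let b : kernel q ⟶ kernel p := kernel.lift p (kernel.ι q ≫ g)
        (by rw [assoc]; exact kernel.condition q)
      have hab : a ≫ b = 𝟙 (kernel p) := by
        rw [← cancel_mono (kernel.ι p)]
        simp [a, b, hs]
      have hA : Subsingleton (extGroup (kernel p) X (m + 1)) :=
        subsingleton_ext_of_retract a b hab X (m + 1) (ih (kernel q) hK')
      haveI : Projective S₀.X₂ := Projective.projective_over F
      exact dimShift S₀ hS₀ X m hA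
  intro F hF n hn
  obtain ⟨m, rfl⟩ : ∃ m, n = m + 1 := ⟨n - 1, by omega⟩
  exact key m F hF
end

section
/- Let B be a cocomplete abelian category with enough projective objects, let 𝒞 be a class of objects of B, and let α be an ordinal. Let (F_i)_{i ≤ α} be a smooth chain in B indexed by the ordinals ≤ α: F_0 = 0, for every limit ordinal j ≤ α the object F_j is the colimit of the chain (F_i)_{i < j}, and for every i < α the morphism F_i → F_{i+1} is a monomorphism whose cokernel S_i satisfies Ext^1_B(S_i, C) = 0 for every C ∈ 𝒞. Then Ext^1_B(F_α, C) = 0 for every C ∈ 𝒞. -/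
universe w v u

open CategoryTheory Limits

/-- The inclusion functor from the ordinals `< j` into the ordinals `≤ α`. -/
def iioInclusion {α : Ordinal.{w}} (j : ↥(Set.Iic α)) :
    ↥(Set.Iio j) ⥤ ↥(Set.Iic α) :=
  Monotone.functor (f := Subtype.val) fun _ _ h => h

/-- The canonical cocone on the restriction of a chain `F : Set.Iic α ⥤ B` to the
ordinals `< j`, with cocone point `F.obj j`. -/
def chainCocone {B : Type u} [Category.{v} B] {α : Ordinal.{w}}
    (F : ↥(Set.Iic α) ⥤ B) (j : ↥(Set.Iic α)) :
    Cocone (iioInclusion j ⋙ F) where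
  pt := F.obj j
  ι :=
    { app := fun i => F.map (homOfLE i.2.le)
      naturality := by
        intro i i' g
        dsimp [iioInclusion]
        rw [Category.comp_id, ← F.map_comp]
        rfl }

/-- The morphism `F_i ⟶ F_{i+1}` in a chain indexed by the ordinals `≤ α`. -/
def toSucc {B : Type u} [Category.{v} B] {α : Ordinal.{w}}
    (F : ↥(Set.Iic α) ⥤ B) (i : Ordinal.{w}) (hi : i < α) :
    F.obj ⟨i, hi.le⟩ ⟶ F.obj ⟨Order.succ i, Order.succ_le_of_lt hi⟩ :=
  F.map (homOfLE (Order.le_succ i))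

section EklofAux

open CategoryTheory Limits

variable {B : Type u} [Category.{v} B] [Abelian B] [EnoughProjectives B]

lemma subsingleton_extGroup_iff (X Y : B) (P : ProjectiveResolution X) :
    Subsingleton (extGroup X Y 1) ↔
      ∀ (g : P.complex.X 1 ⟶ Y), P.complex.d 2 1 ≫ g = 0 →
        ∃ v : P.complex.X 0 ⟶ Y, P.complex.d 1 0 ≫ v = g := by
  set T := P.complex.linearYonedaObj ℤ Y with hT
  have e1 : Subsingleton (extGroup X Y 1) ↔ Subsingleton (T.homology 1) :=
    Equiv.subsingleton_congr ((forget _).mapIso (P.isoExt 1 Y)).toEquiv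
  rw [e1]
  have e2 : Subsingleton (T.homology 1) ↔ IsZero (T.homology 1) := by
    constructor
    · intro h; exact ModuleCat.isZero_of_subsingleton _
    · intro h
      constructor
      intro a b
      have h0 : (𝟙 (T.homology 1)) = 0 := h.eq_of_src _ _
      have key : ∀ x : T.homology 1, x = 0 := by
        intro x
        calc x = (𝟙 (T.homology 1)) x := rfl
          _ = (0 : T.homology 1 ⟶ T.homology 1) x := by rw [h0]
          _ = 0 := rfl
      rw [key a, key b]
  rw [e2, ← HomologicalComplex.exactAt_iff_isZero_homology,
    T.exactAt_iff' 0 1 2 (by simp) (by simp),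
    ShortComplex.moduleCat_exact_iff]
  dsimp [T, ChainComplex.linearYonedaObj]
  exact Iff.rfl

/-- From `Ext¹(S,C) = 0`: any map `ker ε ⟶ C` extends to `P₀ ⟶ C`. -/
lemma extend_of_subsingleton_extGroup {S C : B} (h : Subsingleton (extGroup S C 1))
    (P : ProjectiveResolution S) (u : kernel (P.π.f 0) ⟶ C) :
    ∃ v : P.complex.X 0 ⟶ C, kernel.ι (P.π.f 0) ≫ v = u := by
  set k := kernel.ι (P.π.f 0) with hk
  set d' := kernel.lift (P.π.f 0) (P.complex.d 1 0) P.complex_d_comp_π_f_zero with hd'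
  have hd'k : d' ≫ k = P.complex.d 1 0 := kernel.lift_ι _ _ _
  haveI hepi : Epi d' := (ShortComplex.exact_iff_epi_kernel_lift _).1 P.exact₀
  have hd21 : P.complex.d 2 1 ≫ d' = 0 := by
    rw [← cancel_mono k, Category.assoc, hd'k, zero_comp]
    exact P.complex.d_comp_d 2 1 0
  have h21u' : P.complex.d 2 1 ≫ (d' ≫ u) = 0 := by
    rw [← Category.assoc, hd21, zero_comp]
  obtain ⟨v, hv⟩ := (subsingleton_extGroup_iff S C P).1 h (d' ≫ u) h21u'
  refine ⟨v, ?_⟩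
  rw [← cancel_epi d', ← Category.assoc, hd'k, hv]

/-- From `Ext¹(S,C) = 0`: any short exact sequence `0 → C → Q → S → 0` admits a
retraction of `ι`. -/
lemma retraction_of_subsingleton_extGroup {S C Q : B} (h : Subsingleton (extGroup S C 1))
    (ι : C ⟶ Q) (π : Q ⟶ S) [Epi π] (w : ι ≫ π = 0)
    (hker : IsLimit (KernelFork.ofι ι w)) :
    ∃ r : Q ⟶ C, ι ≫ r = 𝟙 C := by
  haveI hmonoι : Mono ι := mono_of_isLimit_fork hker
  set P := ProjectiveResolution.of S with hP
  set ε : P.complex.X 0 ⟶ S := P.π.f 0 with hε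
  set f0 := Projective.factorThru ε π with hf0def
  have hf0 : f0 ≫ π = ε := Projective.factorThru_comp _ _
  set k := kernel.ι ε with hkdef
  have hkf0 : (k ≫ f0) ≫ π = 0 := by rw [Category.assoc, hf0, kernel.condition]
  obtain ⟨u, hu⟩ := KernelFork.IsLimit.lift' hker (k ≫ f0) hkf0
  rw [Fork.ι_ofι] at hu
  obtain ⟨v, hv⟩ := extend_of_subsingleton_extGroup h P u
  have hσ0 : kernel.ι ε ≫ (f0 - v ≫ ι) = 0 := by
    rw [Preadditive.comp_sub, ← Category.assoc, ← hkdef, show k ≫ v = u from hv, hu, sub_self]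
  haveI : Epi ε := (inferInstance : Epi (P.π.f 0))
  set σ := Abelian.epiDesc ε (f0 - v ≫ ι) hσ0 with hσdef
  have hσ : ε ≫ σ = f0 - v ≫ ι := Abelian.comp_epiDesc _ _ _
  have hσπ : σ ≫ π = 𝟙 S := by
    rw [← cancel_epi ε, ← Category.assoc, hσ, Preadditive.sub_comp, hf0,
      Category.assoc, w, comp_zero, sub_zero]
    simp
  have h1 : (𝟙 Q - π ≫ σ) ≫ π = 0 := by
    rw [Preadditive.sub_comp, Category.id_comp, Category.assoc, hσπ, Category.comp_id, sub_self]
  obtain ⟨r, hr⟩ := KernelFork.IsLimit.lift' hker (𝟙 Q - π ≫ σ) h1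
  rw [Fork.ι_ofι] at hr
  refine ⟨r, ?_⟩
  rw [← cancel_mono ι, Category.assoc, hr, Preadditive.comp_sub, Category.comp_id,
    ← Category.assoc, w, zero_comp, sub_zero, Category.id_comp]

lemma comp_biprod_desc {W P Q E : B} (a : W ⟶ P ⊞ Q) (i : P ⟶ E) (j : Q ⟶ E) :
    a ≫ biprod.desc i j = (a ≫ biprod.fst) ≫ i + (a ≫ biprod.snd) ≫ j := by
  rw [biprod.desc_eq, Preadditive.comp_add, ← Category.assoc, ← Category.assoc]

/-- If every short exact sequence `0 → C → E → X → 0` splits, then `Ext¹(X,C) = 0`. -/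
lemma subsingleton_extGroup_of_sections (X C : B)
    (h : ∀ (E : B) (c : C ⟶ E) (p : E ⟶ X), Epi p → ∀ (w : c ≫ p = 0),
      IsLimit (KernelFork.ofι c w) → ∃ σ : X ⟶ E, σ ≫ p = 𝟙 X) :
    Subsingleton (extGroup X C 1) := by
  set P := ProjectiveResolution.of X with hP
  rw [subsingleton_extGroup_iff X C P]
  intro g hg
  set ε : P.complex.X 0 ⟶ X := P.π.f 0 with hε
  set k := kernel.ι ε with hkdef
  set d' := kernel.lift ε (P.complex.d 1 0) P.complex_d_comp_π_f_zero with hd'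
  have hd'k : d' ≫ k = P.complex.d 1 0 := kernel.lift_ι _ _ _
  haveI hepi : Epi d' := (ShortComplex.exact_iff_epi_kernel_lift _).1 P.exact₀
  -- `g` kills the kernel of `d'`
  have hkd' : kernel.ι d' ≫ g = 0 := by
    set Sc := ShortComplex.mk (P.complex.d 2 1) (P.complex.d 1 0) (P.complex.d_comp_d 2 1 0)
      with hSc
    have hScE : Sc.Exact := P.exact_succ 0
    haveI := hScE.epi_toCycles
    have h7 : Sc.iCycles ≫ g = 0 := by
      rw [← cancel_epi Sc.toCycles, ← Category.assoc, Sc.toCycles_i, comp_zero]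
      exact hg
    have h8 : kernel.ι d' ≫ Sc.g = 0 := by
      show kernel.ι d' ≫ P.complex.d 1 0 = 0
      rw [← hd'k, ← Category.assoc, kernel.condition, zero_comp]
    have h9 : kernel.ι d' = Sc.liftCycles (kernel.ι d') h8 ≫ Sc.iCycles :=
      (Sc.liftCycles_i _ _).symm
    rw [h9, Category.assoc, h7, comp_zero]
  set u := Abelian.epiDesc d' g hkd' with hudef
  have hu : d' ≫ u = g := Abelian.comp_epiDesc _ _ _
  -- pushout
  set E := pushout u k with hE
  set inl : C ⟶ E := pushout.inl u k with hinl
  set inr : P.complex.X 0 ⟶ E := pushout.inr u k with hinr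
  have hco : u ≫ inl = k ≫ inr := pushout.condition
  have hdesc0 : u ≫ (0 : C ⟶ X) = k ≫ ε := by rw [comp_zero, kernel.condition]
  set πE : E ⟶ X := pushout.desc 0 ε hdesc0 with hπE
  have hinlπ : inl ≫ πE = 0 := pushout.inl_desc _ _ _
  have hinrπ : inr ≫ πE = ε := pushout.inr_desc _ _ _
  haveI hεepi : Epi ε := (inferInstance : Epi (P.π.f 0))
  haveI hepiπE : Epi πE := by
    have h10 : Epi (inr ≫ πE) := by rw [hinrπ]; infer_instance
    exact epi_of_epi inr πE
  haveI hmonoinl : Mono inl := by rw [hinl]; infer_instance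
  set ψ : (C ⊞ P.complex.X 0) ⟶ E := biprod.desc inl inr with hψdef
  haveI hψepi : Epi ψ := by
    refine ⟨fun {T} a b hab => ?_⟩
    apply pushout.hom_ext
    · have h1 := congrArg (fun t => biprod.inl ≫ t) hab
      simpa [hψdef, hinl, hinr] using h1
    · have h1 := congrArg (fun t => biprod.inr ≫ t) hab
      simpa [hψdef, hinl, hinr] using h1
  -- inl is the kernel of πE
  have hexE : ∀ {T : B} (z : T ⟶ E), z ≫ πE = 0 → ∃ l : T ⟶ C, l ≫ inl = z := by
    intro T z hz
    set e := pullback.fst z ψ with he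
    set y := pullback.snd z ψ with hy
    haveI hee : Epi e := by rw [he]; infer_instance
    have hey : e ≫ z = y ≫ ψ := pullback.condition
    set y₁ := y ≫ biprod.fst with hy₁
    set y₂ := y ≫ biprod.snd with hy₂
    have hyψ : y ≫ ψ = y₁ ≫ inl + y₂ ≫ inr := comp_biprod_desc y inl inr
    have hy₂ε : y₂ ≫ ε = 0 := by
      have h0 : (y₁ ≫ inl + y₂ ≫ inr) ≫ πE = 0 := by
        rw [← hyψ, ← hey, Category.assoc, hz, comp_zero]
      simp only [Preadditive.add_comp, Category.assoc, hinlπ, hinrπ, comp_zero, zero_add] at h0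
      exact h0
    set m := kernel.lift ε y₂ hy₂ε with hm
    have hmk : m ≫ k = y₂ := kernel.lift_ι _ _ _
    have h10 : e ≫ z = (y₁ + m ≫ u) ≫ inl := by
      rw [hey, hyψ, Preadditive.add_comp, Category.assoc m u inl, hco,
        ← Category.assoc m k inr, hmk]
    have h11 : kernel.ι e ≫ (y₁ + m ≫ u) = 0 := by
      rw [← cancel_mono inl, Category.assoc, ← h10, ← Category.assoc, kernel.condition,
        zero_comp, zero_comp]
    refine ⟨Abelian.epiDesc e (y₁ + m ≫ u) h11, ?_⟩
    rw [← cancel_epi e, ← Category.assoc, Abelian.comp_epiDesc, ← h10]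
  have hkerE : IsLimit (KernelFork.ofι inl hinlπ) := by
    refine KernelFork.IsLimit.ofι _ _ (fun {T} z hz => (hexE z hz).choose)
      (fun {T} z hz => (hexE z hz).choose_spec) (fun {T} z hz m' hm' => ?_)
    rw [← cancel_mono inl, hm', (hexE z hz).choose_spec]
  obtain ⟨σ, hσ⟩ := h E inl πE hepiπE hinlπ hkerE
  have h9 : (𝟙 E - πE ≫ σ) ≫ πE = 0 := by
    rw [Preadditive.sub_comp, Category.id_comp, Category.assoc, hσ, Category.comp_id, sub_self]
  obtain ⟨ρ, hρ⟩ := hexE (𝟙 E - πE ≫ σ) h9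
  have hinlρ : inl ≫ ρ = 𝟙 C := by
    rw [← cancel_mono inl, Category.assoc, hρ, Preadditive.comp_sub, Category.comp_id,
      ← Category.assoc, hinlπ, zero_comp, sub_zero, Category.id_comp]
  refine ⟨inr ≫ ρ, ?_⟩
  have hkv : k ≫ inr ≫ ρ = u := by
    rw [← Category.assoc, ← hco, Category.assoc, hinlρ, Category.comp_id]
  rw [← hd'k, Category.assoc, hkv, hu]

/-- Successor step: extend a partial section along `f : X ⟶ X'` when
`Ext¹(coker f, C) = 0`. -/
lemma step_lemma {C E G X X' : B} (c : C ⟶ E) (p : E ⟶ G) [Epi p] (w : c ≫ p = 0)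
    (hc : IsLimit (KernelFork.ofι c w)) (f : X ⟶ X') [Mono f] (g : X' ⟶ G)
    (s : X ⟶ E) (hs : s ≫ p = f ≫ g)
    (hext : Subsingleton (extGroup (cokernel f) C 1)) :
    ∃ t : X' ⟶ E, t ≫ p = g ∧ f ≫ t = s := by
  set fst := pullback.fst g p with hfst
  set snd := pullback.snd g p with hsnd
  have hcond : fst ≫ g = snd ≫ p := pullback.condition
  haveI hfstepi : Epi fst := by rw [hfst]; infer_instance
  set u : X ⟶ pullback g p := pullback.lift f s hs.symm with hud
  have hufst : u ≫ fst = f := pullback.lift_fst _ _ _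
  have husnd : u ≫ snd = s := pullback.lift_snd _ _ _
  have hw0 : (0 : C ⟶ X') ≫ g = c ≫ p := by rw [zero_comp, w]
  set ι' : C ⟶ pullback g p := pullback.lift 0 c hw0 with hι'd
  have hι'fst : ι' ≫ fst = 0 := pullback.lift_fst _ _ _
  have hι'snd : ι' ≫ snd = c := pullback.lift_snd _ _ _
  have hmono_c : Mono c := mono_of_isLimit_fork hc
  haveI hmono_ι' : Mono ι' := by
    haveI h1 : Mono (ι' ≫ snd) := by rw [hι'snd]; exact hmono_c
    exact mono_of_mono ι' snd
  haveI hmono_u : Mono u := by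
    haveI h1 : Mono (u ≫ fst) := by rw [hufst]; infer_instance
    exact mono_of_mono u fst
  -- ι' is the kernel of fst
  have kerfst : ∀ {T : B} (z : T ⟶ pullback g p), z ≫ fst = 0 → ∃ l : T ⟶ C, l ≫ ι' = z := by
    intro T z hz
    have h1 : (z ≫ snd) ≫ p = 0 := by
      rw [Category.assoc, ← hcond, ← Category.assoc, hz, zero_comp]
    obtain ⟨l, hl⟩ := KernelFork.IsLimit.lift' hc (z ≫ snd) h1
    rw [Fork.ι_ofι] at hl
    refine ⟨l, ?_⟩
    apply pullback.hom_ext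
    · rw [Category.assoc]
      show l ≫ ι' ≫ fst = z ≫ fst
      rw [hι'fst, comp_zero, hz]
    · rw [Category.assoc]
      show l ≫ ι' ≫ snd = z ≫ snd
      rw [hι'snd, hl]
  set πQ := cokernel.π u with hπQ
  have hwdesc : u ≫ (fst ≫ cokernel.π f) = 0 := by
    rw [← Category.assoc, hufst, cokernel.condition]
  set wmap : cokernel u ⟶ cokernel f := cokernel.desc u (fst ≫ cokernel.π f) hwdesc with hwm
  have hπw : πQ ≫ wmap = fst ≫ cokernel.π f := cokernel.π_desc _ _ _
  haveI hwepi : Epi wmap := by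
    have h2 : Epi (πQ ≫ wmap) := by
      rw [hπw]
      exact epi_comp _ _
    exact epi_of_epi πQ wmap
  set ιQ : C ⟶ cokernel u := ι' ≫ πQ with hιQd
  have hιQw : ιQ ≫ wmap = 0 := by
    rw [hιQd, Category.assoc, hπw, ← Category.assoc, hι'fst, zero_comp]
  have hιQcancel : ∀ {T : B} (a : T ⟶ C), a ≫ ιQ = 0 → a = 0 := by
    intro T a ha
    rw [hιQd, ← Category.assoc] at ha
    set b := Abelian.monoLift u (a ≫ ι') ha with hbd
    have hb : b ≫ u = a ≫ ι' := Abelian.monoLift_comp _ _ _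
    have hbf : b ≫ f = 0 := by
      rw [← hufst, ← Category.assoc, hb, Category.assoc, hι'fst, comp_zero]
    have hb0 : b = 0 := by
      rw [← cancel_mono f, hbf, zero_comp]
    have haι : a ≫ ι' = 0 := by rw [← hb, hb0, zero_comp]
    rw [← cancel_mono ι', haι, zero_comp]
  -- existence part of the kernel property of ιQ
  have hex : ∀ {T : B} (q : T ⟶ cokernel u), q ≫ wmap = 0 → ∃ l : T ⟶ C, l ≫ ιQ = q := by
    intro T q hq
    set e := pullback.fst q πQ with hed
    set y := pullback.snd q πQ with hyd
    haveI hπQepi : Epi πQ := by rw [hπQ]; infer_instance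
    haveI hee : Epi e := by rw [hed]; infer_instance
    have hey : e ≫ q = y ≫ πQ := pullback.condition
    have h3 : (y ≫ fst) ≫ cokernel.π f = 0 := by
      rw [Category.assoc, ← hπw, ← Category.assoc, ← hey, Category.assoc, hq, comp_zero]
    set m := Abelian.monoLift f (y ≫ fst) h3 with hmd
    have hm : m ≫ f = y ≫ fst := Abelian.monoLift_comp _ _ _
    have h4 : (y - m ≫ u) ≫ fst = 0 := by
      rw [Preadditive.sub_comp, Category.assoc, hufst, hm, sub_self]
    obtain ⟨l', hl'⟩ := kerfst (y - m ≫ u) h4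
    have h5 : e ≫ q = l' ≫ ιQ := by
      rw [hιQd, ← Category.assoc, hl', Preadditive.sub_comp, Category.assoc,
        cokernel.condition, comp_zero, sub_zero, hey]
    have h6 : kernel.ι e ≫ l' = 0 := by
      apply hιQcancel
      rw [Category.assoc, ← h5, ← Category.assoc, kernel.condition, zero_comp]
    refine ⟨Abelian.epiDesc e l' h6, ?_⟩
    rw [← cancel_epi e, ← Category.assoc, Abelian.comp_epiDesc, ← h5]
  have hkerQ : IsLimit (KernelFork.ofι ιQ hιQw) := by
    refine KernelFork.IsLimit.ofι _ _ (fun {T} q hq => (hex q hq).choose)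
      (fun {T} q hq => (hex q hq).choose_spec) (fun {T} q hq m' hm' => ?_)
    have h7 : (m' - (hex q hq).choose) ≫ ιQ = 0 := by
      rw [Preadditive.sub_comp, hm', (hex q hq).choose_spec, sub_self]
    have := hιQcancel _ h7
    rwa [sub_eq_zero] at this
  obtain ⟨r, hr⟩ := retraction_of_subsingleton_extGroup hext ιQ wmap hιQw hkerQ
  set ρ := πQ ≫ r with hρd
  have hι'ρ : ι' ≫ ρ = 𝟙 C := by rw [hρd, ← Category.assoc]; exact hr
  have huρ : u ≫ ρ = 0 := by
    rw [hρd, ← Category.assoc, cokernel.condition, zero_comp]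
  have hk1 : kernel.ι fst ≫ (𝟙 (pullback g p) - ρ ≫ ι') = 0 := by
    obtain ⟨l, hl⟩ := kerfst (kernel.ι fst) (kernel.condition fst)
    rw [← hl, Category.assoc, Preadditive.comp_sub, Category.comp_id, ← Category.assoc ι' ρ ι',
      hι'ρ, Category.id_comp, sub_self, comp_zero]
  set σ := Abelian.epiDesc fst (𝟙 (pullback g p) - ρ ≫ ι') hk1 with hσd
  have hσ : fst ≫ σ = 𝟙 (pullback g p) - ρ ≫ ι' := Abelian.comp_epiDesc _ _ _
  have hσfst : σ ≫ fst = 𝟙 X' := by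
    rw [← cancel_epi fst, ← Category.assoc, hσ, Preadditive.sub_comp, Category.id_comp,
      Category.assoc, hι'fst, comp_zero, sub_zero, Category.comp_id]
  have hfσ : f ≫ σ = u := by
    rw [← hufst, Category.assoc, hσ, Preadditive.comp_sub, Category.comp_id,
      ← Category.assoc u ρ ι', huρ, zero_comp, sub_zero]
  refine ⟨σ ≫ snd, ?_, ?_⟩
  · rw [Category.assoc, ← hcond, ← Category.assoc, hσfst, Category.id_comp]
  · rw [← Category.assoc, hfσ, husnd]

end EklofAux

/-- A partial compatible system of liftings of the maps `F_k ⟶ F_α` through `p`. -/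
structure PSec {B : Type u} [Category.{v} B] [Abelian B] {α : Ordinal.{w}}
    (F : ↥(Set.Iic α) ⥤ B) (E : B) (p : E ⟶ F.obj ⟨α, le_refl α⟩) where
  top : Ordinal.{w}
  htop : top ≤ α
  s : ∀ (k : Ordinal.{w}) (hk : k ≤ top), F.obj ⟨k, hk.trans htop⟩ ⟶ E
  lift : ∀ (k : Ordinal.{w}) (hk : k ≤ top),
    s k hk ≫ p = F.map (homOfLE (show (⟨k, hk.trans htop⟩ : Set.Iic α) ≤ ⟨α, le_refl α⟩ from
      hk.trans htop))
  compat : ∀ (k k' : Ordinal.{w}) (hkk' : k ≤ k') (hk' : k' ≤ top),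
    F.map (homOfLE (show (⟨k, (hkk'.trans hk').trans htop⟩ : Set.Iic α) ≤ ⟨k', hk'.trans htop⟩
      from hkk')) ≫ s k' hk' = s k (hkk'.trans hk')

instance {B : Type u} [Category.{v} B] [Abelian B] {α : Ordinal.{w}}
    (F : ↥(Set.Iic α) ⥤ B) (E : B) (p : E ⟶ F.obj ⟨α, le_refl α⟩) :
    Preorder (PSec F E p) where
  le a b := ∃ h : a.top ≤ b.top, ∀ (k : Ordinal) (hk : k ≤ a.top), b.s k (hk.trans h) = a.s k hk
  le_refl a := ⟨le_refl _, fun _ _ => rfl⟩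
  le_trans a b c hab hbc := by
    obtain ⟨h1, e1⟩ := hab
    obtain ⟨h2, e2⟩ := hbc
    exact ⟨h1.trans h2, fun k hk => (e2 k (hk.trans h1)).trans (e1 k hk)⟩

/-- **Eklof lemma.**  Let `B` be a cocomplete abelian category with enough projectives,
`𝓒` a class of objects of `B` and `(F_i)_{i ≤ α}` a smooth chain in `B` such that
`F_0 = 0`, `F_j = colim_{i < j} F_i` for every limit ordinal `j ≤ α`, and for every
`i < α` the morphism `F_i → F_{i+1}` is a monomorphism whose cokernel `S_i` satisfies
`Ext¹(S_i, C) = 0` for all `C ∈ 𝓒`.  Then `Ext¹(F_α, C) = 0` for all `C ∈ 𝓒`. -/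
theorem eklof_lemma
    {B : Type u} [Category.{v} B] [Abelian B] [HasColimits B] [EnoughProjectives B]
    (𝓒 : Set B) (α : Ordinal.{w}) (F : ↥(Set.Iic α) ⥤ B)
    (h0 : IsZero (F.obj ⟨0, zero_le (a := α)⟩))
    (hlim : ∀ j : ↥(Set.Iic α), Order.IsSuccLimit (j : Ordinal.{w}) →
      Nonempty (IsColimit (chainCocone F j)))
    (hmono : ∀ (i : Ordinal.{w}) (hi : i < α), Mono (toSucc F i hi))
    (hext : ∀ (i : Ordinal.{w}) (hi : i < α), ∀ C ∈ 𝓒,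
      Subsingleton (extGroup (cokernel (toSucc F i hi)) C 1)) :
    ∀ C ∈ 𝓒, Subsingleton (extGroup (F.obj ⟨α, le_refl α⟩) C 1) := by
  intro C hC
  apply subsingleton_extGroup_of_sections
  intro E c p hp w hker
  haveI := hp
  -- Zorn's lemma on partial sections
  have hbound : ∀ ch : Set (PSec F E p), IsChain (· ≤ ·) ch → BddAbove ch := by
    intro ch hch
    by_cases hne : ch.Nonempty
    · obtain ⟨a₀, ha₀⟩ := hne
      set iS : Set Ordinal.{w} := PSec.top '' ch with hiS
      have hiSne : iS.Nonempty := ⟨a₀.top, ⟨a₀, ha₀, rfl⟩⟩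
      have hbddS : BddAbove iS := ⟨α, by rintro x ⟨a, _, rfl⟩; exact a.htop⟩
      set i0 := sSup iS with hi0
      have hi0α : i0 ≤ α := csSup_le hiSne (by rintro x ⟨a, _, rfl⟩; exact a.htop)
      have hle_i0 : ∀ a ∈ ch, a.top ≤ i0 := fun a ha => le_csSup hbddS ⟨a, ha, rfl⟩
      have hch2 : ∀ (a b : PSec F E p), a ∈ ch → b ∈ ch →
          ∀ (k : Ordinal) (hka : k ≤ a.top) (hkb : k ≤ b.top), a.s k hka = b.s k hkb := by
        intro a b ha hb k hka hkb
        rcases hch.total ha hb with hab | hba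
        · obtain ⟨h1, e1⟩ := hab
          exact (e1 k hka).symm
        · obtain ⟨h1, e1⟩ := hba
          exact e1 k hkb
      by_cases hatt : ∃ a ∈ ch, a.top = i0
      · obtain ⟨a, ha, htopa⟩ := hatt
        refine ⟨a, ?_⟩
        intro b hb
        refine ⟨htopa ▸ hle_i0 b hb, ?_⟩
        intro k hk
        exact hch2 a b ha hb k _ hk
      · have hnotmem : ∀ a ∈ ch, a.top < i0 :=
          fun a ha => lt_of_le_of_ne (hle_i0 a ha) (fun h => hatt ⟨a, ha, h⟩)
        have hex2 : ∀ k < i0, ∃ a ∈ ch, k < a.top := by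
          intro k hk
          by_contra hcon
          push_neg at hcon
          have h1 : i0 ≤ k := csSup_le hiSne (by rintro x ⟨a, ha, rfl⟩; exact hcon a ha)
          exact absurd hk (not_lt.mpr h1)
        have hi0lim : Order.IsSuccLimit i0 := by
          rw [Ordinal.isSuccLimit_iff, Order.isSuccPrelimit_iff_succ_lt]
          constructor
          · intro h00
            have := hnotmem a₀ ha₀
            rw [h00] at this
            exact absurd this (not_lt_of_ge zero_le)
          · intro b hb
            obtain ⟨a, ha, hba⟩ := hex2 b hb
            exact lt_of_le_of_lt (Order.succ_le_of_lt hba) (hnotmem a ha)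
        have hchoice : ∀ (k : Ordinal) (_ : k < i0), ∃ a, a ∈ ch ∧ k ≤ a.top := by
          intro k hk
          obtain ⟨a, ha, h⟩ := hex2 k hk
          exact ⟨a, ha, h.le⟩
        set sAux : ∀ (k : Ordinal) (hk : k < i0), F.obj ⟨k, hk.le.trans hi0α⟩ ⟶ E :=
          fun k hk => (hchoice k hk).choose.s k (hchoice k hk).choose_spec.2 with hsAuxd
        have hsAux_eq : ∀ (k : Ordinal) (hk : k < i0) (a : PSec F E p) (ha : a ∈ ch)
            (hka : k ≤ a.top), sAux k hk = a.s k hka :=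
          fun k hk a ha hka =>
            hch2 _ a (hchoice k hk).choose_spec.1 ha k (hchoice k hk).choose_spec.2 hka
        have hsAux_lift : ∀ (k : Ordinal) (hk : k < i0),
            sAux k hk ≫ p = F.map (homOfLE (show (⟨k, hk.le.trans hi0α⟩ : Set.Iic α) ≤
              ⟨α, le_refl α⟩ from hk.le.trans hi0α)) :=
          fun k hk => (hchoice k hk).choose.lift k (hchoice k hk).choose_spec.2
        have hsAux_compat : ∀ (k k' : Ordinal) (hkk' : k ≤ k') (hk' : k' < i0),
            F.map (homOfLE (show (⟨k, ((hkk'.trans hk'.le)).trans hi0α⟩ : Set.Iic α) ≤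
              ⟨k', hk'.le.trans hi0α⟩ from hkk')) ≫ sAux k' hk' =
              sAux k (lt_of_le_of_lt hkk' hk') := by
          intro k k' hkk' hk'
          have h1 := (hchoice k' hk').choose.compat k k' hkk' (hchoice k' hk').choose_spec.2
          rw [hsAux_eq k (lt_of_le_of_lt hkk' hk') (hchoice k' hk').choose
            (hchoice k' hk').choose_spec.1 (hkk'.trans (hchoice k' hk').choose_spec.2)]
          exact h1
        set j0 : ↥(Set.Iic α) := ⟨i0, hi0α⟩ with hj0
        obtain ⟨L⟩ := hlim j0 hi0lim
        set D : Cocone (iioInclusion j0 ⋙ F) :=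
          { pt := E
            ι :=
              { app := fun x => sAux x.1.1 (show x.1.1 < j0.1 from Subtype.coe_lt_coe.mpr x.2)
                naturality := by
                  intro x x' gmor
                  simp only [Functor.const_obj_map, Category.comp_id]
                  have h2 : (iioInclusion j0 ⋙ F).map gmor =
                      F.map (homOfLE (show (⟨x.1.1, _⟩ : Set.Iic α) ≤ ⟨x'.1.1, _⟩ from
                        Subtype.coe_le_coe.mpr (leOfHom gmor))) :=
                    congrArg F.map (Subsingleton.elim _ _)
                  rw [h2]
                  exact (hsAux_compat x.1.1 x'.1.1 (Subtype.coe_le_coe.mpr (leOfHom gmor))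
                    (show x'.1.1 < j0.1 from Subtype.coe_lt_coe.mpr x'.2)).trans (Category.comp_id _).symm } } with hD
        set sTop : F.obj j0 ⟶ E := L.desc D with hsTop
        have hfac : ∀ (k : Ordinal) (hk : k < i0),
            F.map (homOfLE (show (⟨k, hk.le.trans hi0α⟩ : Set.Iic α) ≤ j0 from hk.le)) ≫ sTop =
              sAux k hk :=
          fun k hk => L.fac D ⟨⟨k, hk.le.trans hi0α⟩,
            show (⟨k, hk.le.trans hi0α⟩ : ↥(Set.Iic α)) < j0 from Subtype.mk_lt_mk.mpr hk⟩
        have hsTopp : sTop ≫ p = F.map (homOfLE (show j0 ≤ ⟨α, le_refl α⟩ from hi0α)) := by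
          refine L.hom_ext fun x => ?_
          have h1 := L.fac D x
          refine (Category.assoc _ _ _).symm.trans ?_
          refine (congrArg (· ≫ p) (show (chainCocone F j0).ι.app x ≫ sTop = D.ι.app x from h1)).trans ?_
          have h3 : D.ι.app x ≫ p = F.map (homOfLE (show x.1 ≤ (⟨α, le_refl α⟩ : Set.Iic α) from
              x.1.2)) := hsAux_lift x.1.1 (show x.1.1 < j0.1 from Subtype.coe_lt_coe.mpr x.2)
          refine h3.trans ?_
          show _ = F.map (homOfLE _) ≫ F.map (homOfLE _)
          refine Eq.trans ?_ (F.map_comp _ _)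
          exact congrArg F.map (Subsingleton.elim _ _)
        refine ⟨⟨i0, hi0α,
          fun k hk => F.map (homOfLE (show (⟨k, hk.trans hi0α⟩ : Set.Iic α) ≤ j0 from hk)) ≫ sTop,
          ?_, ?_⟩, ?_⟩
        · intro k hk
          rw [Category.assoc, hsTopp, ← F.map_comp]
          exact congrArg F.map (Subsingleton.elim _ _)
        · intro k k' hkk' hk'
          rw [← Category.assoc, ← F.map_comp]
          exact congrArg (fun q => q ≫ sTop) (congrArg F.map (Subsingleton.elim _ _))
        · intro b hb
          refine ⟨hle_i0 b hb, ?_⟩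
          intro k hk
          have hklt : k < i0 := lt_of_le_of_lt hk (hnotmem b hb)
          exact (hfac k hklt).trans (hsAux_eq k hklt b hb hk)
    · refine ⟨⟨0, zero_le (a := α), fun k hk => 0, ?_, ?_⟩, fun b hb => (hne ⟨b, hb⟩).elim⟩
      · intro k hk
        have hk0 : k = 0 := nonpos_iff_eq_zero.mp hk
        subst hk0
        exact h0.eq_of_src _ _
      · intro k k' hkk' hk'
        have hk0 : k = 0 := nonpos_iff_eq_zero.mp (hkk'.trans hk')
        subst hk0
        exact h0.eq_of_src _ _
  obtain ⟨M, hM⟩ := zorn_le hbound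
  -- maximal element reaches α
  have hMtop : M.top = α := by
    by_contra hne'
    have hMlt : M.top < α := M.htop.lt_of_ne hne'
    set f := F.map (homOfLE (show (⟨M.top, hMlt.le⟩ : Set.Iic α) ≤
      ⟨Order.succ M.top, Order.succ_le_of_lt hMlt⟩ from Order.le_succ M.top)) with hf
    haveI : Mono f := hmono M.top hMlt
    have hextc : Subsingleton (extGroup (cokernel f) C 1) := hext M.top hMlt C hC
    set g := F.map (homOfLE (show (⟨Order.succ M.top, Order.succ_le_of_lt hMlt⟩ : Set.Iic α) ≤
      ⟨α, le_refl α⟩ from Order.succ_le_of_lt hMlt)) with hg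
    set s0 := M.s M.top (le_refl M.top) with hs0d
    have hs0 : s0 ≫ p = f ≫ g := by
      rw [M.lift M.top (le_refl M.top), hf, hg, ← F.map_comp]
      exact congrArg F.map (Subsingleton.elim _ _)
    obtain ⟨t, ht1, ht2⟩ := step_lemma c p w hker f g s0 hs0 hextc
    set bEx : PSec F E p :=
      { top := Order.succ M.top
        htop := Order.succ_le_of_lt hMlt
        s := fun k hk => F.map (homOfLE (show (⟨k, hk.trans (Order.succ_le_of_lt hMlt)⟩ :
          Set.Iic α) ≤ ⟨Order.succ M.top, Order.succ_le_of_lt hMlt⟩ from hk)) ≫ t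
        lift := by
          intro k hk
          rw [Category.assoc, ht1, hg, ← F.map_comp]
          exact congrArg F.map (Subsingleton.elim _ _)
        compat := by
          intro k k' hkk' hk'
          rw [← Category.assoc, ← F.map_comp]
          exact congrArg (fun q => q ≫ t) (congrArg F.map (Subsingleton.elim _ _)) } with hbEx
    have hMb : M ≤ bEx := by
      refine ⟨Order.le_succ _, ?_⟩
      intro k hk
      have h4 : bEx.s k (hk.trans (Order.le_succ M.top)) =
          F.map (homOfLE (show (⟨k, (hk.trans (le_refl M.top)).trans M.htop⟩ : Set.Iic α) ≤
            ⟨M.top, hMlt.le⟩ from hk)) ≫ (f ≫ t) := by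
        show F.map (homOfLE _) ≫ t = _
        rw [← Category.assoc, hf, ← F.map_comp]
        exact congrArg (fun q => q ≫ t) (congrArg F.map (Subsingleton.elim _ _))
      rw [h4, ht2]
      exact M.compat k M.top hk (le_refl M.top)
    obtain ⟨hle2, _⟩ := hM hMb
    exact absurd (Order.succ_le_iff.mp hle2) (lt_irrefl _)
  refine ⟨M.s α (le_of_eq hMtop.symm), ?_⟩
  rw [M.lift α (le_of_eq hMtop.symm),
    show homOfLE _ = 𝟙 ((⟨α, le_refl α⟩ : Set.Iic α)) from Subsingleton.elim _ _, F.map_id]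
end

section
/- Let B be an abelian category with enough projective objects and all (small) coproducts, let A be an object of B, and let n be an integer. Let D• denote the contractible two-term complex ⋯ → 0 → A →(id) A → 0 → ⋯ concentrated in cohomological degrees n and n+1. Then for every unbounded cochain complex B• in B and every integer i ≥ 0 there is a natural isomorphism of abelian groups Ext^i_{Ch(B)}(D•, B•) ≅ Ext^i_B(A, B^n), where Ch(B) is the abelian category of unbounded cochain complexes in B. -/
universe v u

open CategoryTheory Limits

/-- The `n`-th Ext group of two objects of an abelian category, defined via morphisms
in the derived category. -/
noncomputable def extType {C : Type u} [Category.{v} C] [Abelian C]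
    (X Y : C) (n : ℕ) : Type (max u v) :=
  letI : HasDerivedCategory.{max u v} C := HasDerivedCategory.standard C
  letI : HasExt.{max u v} C := hasExt_of_hasDerivedCategory C
  Abelian.Ext X Y n

noncomputable instance extTypeAddCommGroup {C : Type u} [Category.{v} C] [Abelian C]
    (X Y : C) (n : ℕ) : AddCommGroup (extType X Y n) :=
  letI : HasDerivedCategory.{max u v} C := HasDerivedCategory.standard C
  letI : HasExt.{max u v} C := hasExt_of_hasDerivedCategory C
  inferInstanceAs (AddCommGroup (Abelian.Ext X Y n))

universe w₁ w₂ w v₁ v₂ u₁ u₂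

open CategoryTheory Category Limits ZeroObject HomologicalComplex

namespace DiskProof

variable {B : Type u} [Category.{v} B] [Abelian B]

variable (B) in
noncomputable def diskX (n : ℤ) (A : B) (m : ℤ) : B :=
  if m = n ∨ m = n + 1 then A else 0

lemma diskX_eq {n m : ℤ} (A : B) (h : m = n ∨ m = n + 1) : diskX B n A m = A :=
  if_pos h

lemma isZero_diskX {n m : ℤ} (A : B) (h : ¬ (m = n ∨ m = n + 1)) :
    IsZero (diskX B n A m) := by
  rw [diskX, if_neg h]
  exact isZero_zero B

variable (B) in
/-- The "disk" functor sending `A` to the complex `⋯ → 0 → A →(id) A → 0 → ⋯`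
in degrees `n` and `n+1`. -/
@[reducible]
noncomputable def disk (n : ℤ) : B ⥤ CochainComplex B ℤ where
  obj A :=
    { X := diskX B n A
      d := fun m m' =>
        if h : m = n ∧ m' = n + 1 then
          eqToHom (diskX_eq A (Or.inl h.1)) ≫ eqToHom (diskX_eq A (Or.inr h.2)).symm
        else 0
      shape := fun m m' hmm => by
        rw [dif_neg]
        rintro ⟨rfl, rfl⟩
        exact hmm rfl
      d_comp_d' := fun i j k _ _ => by
        by_cases h1 : i = n ∧ j = n + 1
        · rw [dif_neg (by omega : ¬ (j = n ∧ k = n + 1)), comp_zero]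
        · rw [dif_neg h1, zero_comp] }
  map {A A'} f :=
    { f := fun m =>
        if h : m = n ∨ m = n + 1 then
          eqToHom (diskX_eq A h) ≫ f ≫ eqToHom (diskX_eq A' h).symm
        else 0
      comm' := fun i j _ => by
        dsimp only
        by_cases h : i = n ∧ j = n + 1
        · obtain ⟨rfl, rfl⟩ := h
          split_ifs <;> first | (try simp) <;> omega | simp
        · rw [dif_neg h, dif_neg h, zero_comp, comp_zero] }
  map_id A := by
    ext m
    dsimp
    split_ifs with h
    · simp
    · exact ((isZero_diskX A h).eq_of_src _ _).symm
  map_comp f g := by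
    ext m
    dsimp
    split_ifs with h
    · simp
    · simp

instance (n : ℤ) : (disk B n).Additive where
  map_add {A A'} {f g} := by
    ext m
    rw [HomologicalComplex.add_f_apply]
    dsimp [disk]
    split_ifs with h
    · simp
    · simp


variable (B) in
/-- `disk B n` is left adjoint to evaluation at `n`. -/
noncomputable def diskAdj (n : ℤ) : disk B n ⊣ HomologicalComplex.eval B (ComplexShape.up ℤ) n :=
  Adjunction.mkOfHomEquiv
    { homEquiv := fun A K =>
        { toFun := fun φ => eqToHom (diskX_eq A (Or.inl rfl)).symm ≫ φ.f n
          invFun := fun (g : A ⟶ K.X n) =>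
            { f := fun m =>
                if h : m = n then
                  eqToHom (diskX_eq A (Or.inl h)) ≫ g ≫ eqToHom (show K.X n = K.X m by rw [h])
                else if h' : m = n + 1 then
                  eqToHom (diskX_eq A (Or.inr h')) ≫ g ≫ K.d n (n + 1) ≫
                    eqToHom (show K.X (n + 1) = K.X m by rw [h'])
                else 0
              comm' := fun i j hij => by
                obtain rfl : j = i + 1 := hij.symm
                dsimp only [disk]
                by_cases h : i = n
                · subst h
                  rw [dif_pos rfl, dif_neg (show ¬ (i + 1 = i) by omega), dif_pos rfl,
                    dif_pos ⟨rfl, rfl⟩]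
                  simp
                · by_cases h' : i = n + 1
                  · subst h'
                    rw [dif_neg (show ¬ (n + 1 = n) by omega), dif_pos rfl,
                      dif_neg (show ¬ (n + 1 = n ∧ n + 1 + 1 = n + 1) by omega), zero_comp]
                    simp
                  · rw [dif_neg h, dif_neg h', zero_comp,
                      dif_neg (show ¬ (i = n ∧ i + 1 = n + 1) by omega), zero_comp] }
          left_inv := fun φ => by
            ext m
            dsimp only [disk]
            by_cases h : m = n
            · subst h
              rw [dif_pos rfl]
              simp
              erw [comp_id, ← assoc, eqToHom_trans, eqToHom_refl, id_comp]
            · by_cases h' : m = n + 1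
              · subst h'
                rw [dif_neg h, dif_pos rfl]
                have := φ.comm n (n + 1)
                dsimp only [disk] at this
                rw [dif_pos ⟨rfl, rfl⟩] at this
                simp only [eqToHom_refl, comp_id, assoc]
                erw [assoc, this]
                simp
              · exact ((isZero_diskX A (by tauto)).eq_of_src _ _).symm
          right_inv := fun (g : A ⟶ K.X n) => by
            dsimp only [disk]
            rw [dif_pos rfl]
            simp
            erw [eqToHom_trans_assoc, eqToHom_refl, id_comp] }
      homEquiv_naturality_left_symm := fun {A' A K} f g => by
        ext m
        dsimp only [disk]
        simp only [Equiv.coe_fn_symm_mk, HomologicalComplex.comp_f]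
        erw [Equiv.coe_fn_symm_mk, Equiv.coe_fn_symm_mk]
        dsimp only
        by_cases h : m = n
        · rw [dif_pos h, dif_pos h, dif_pos (Or.inl h)]
          simp
          erw [assoc]
        · by_cases h' : m = n + 1
          · rw [dif_neg h, dif_pos h', dif_neg h, dif_pos h', dif_pos (Or.inr h')]
            simp
            erw [assoc]
          · rw [dif_neg h, dif_neg h', dif_neg h, dif_neg h',
              dif_neg (show ¬ (m = n ∨ m = n + 1) by tauto), zero_comp]
      homEquiv_naturality_right := fun {A K K'} f g => by
        dsimp
        simp
        exact (assoc _ _ _).symm }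

variable (B) in
/-- Evaluation at `n + 1` is left adjoint to `disk B n`. -/
noncomputable def evalAdj (n : ℤ) : HomologicalComplex.eval B (ComplexShape.up ℤ) (n + 1) ⊣ disk B n :=
  Adjunction.mkOfHomEquiv
    { homEquiv := fun K A =>
        { toFun := fun (g : K.X (n + 1) ⟶ A) =>
            { f := fun m =>
                if h : m = n + 1 then
                  eqToHom (show K.X m = K.X (n + 1) by rw [h]) ≫ g ≫ eqToHom (diskX_eq A (Or.inr h)).symm
                else if h' : m = n then
                  eqToHom (show K.X m = K.X n by rw [h']) ≫ K.d n (n + 1) ≫ g ≫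
                    eqToHom (diskX_eq A (Or.inl h')).symm
                else 0
              comm' := fun i j hij => by
                obtain rfl : j = i + 1 := hij.symm
                dsimp only [disk]
                by_cases h : i = n
                · subst h
                  rw [dif_neg (show ¬ (i = i + 1) by omega), dif_pos rfl, dif_pos rfl,
                    dif_pos ⟨rfl, rfl⟩]
                  simp
                · by_cases h' : i = n + 1
                  · subst h'
                    rw [dif_pos rfl, dif_neg (show ¬ (n + 1 + 1 = n + 1) by omega),
                      dif_neg (show ¬ (n + 1 + 1 = n) by omega),
                      dif_neg (show ¬ (n + 1 = n ∧ n + 1 + 1 = n + 1) by omega), comp_zero]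
                    simp
                  · rw [dif_neg h', dif_neg h, zero_comp]
                    by_cases hj' : i + 1 = n
                    · subst hj'
                      rw [dif_neg (show ¬ (i + 1 = i + 1 + 1) by omega), dif_pos rfl]
                      simp
                    · rw [dif_neg (show ¬ (i + 1 = n + 1) by omega), dif_neg hj', comp_zero] }
          invFun := fun φ => φ.f (n + 1) ≫ eqToHom (diskX_eq A (Or.inr rfl))
          left_inv := fun (g : K.X (n + 1) ⟶ A) => by
            dsimp only
            rw [dif_pos rfl]
            simp
            erw [assoc, eqToHom_trans, eqToHom_refl, comp_id]
          right_inv := fun φ => by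
            ext m
            dsimp only [disk]
            by_cases h : m = n + 1
            · subst h
              rw [dif_pos rfl]
              simp
              erw [assoc, eqToHom_trans, eqToHom_refl, comp_id]
            · by_cases h' : m = n
              · subst h'
                rw [dif_neg h, dif_pos rfl]
                have := φ.comm m (m + 1)
                dsimp only [disk] at this
                rw [dif_pos ⟨rfl, rfl⟩] at this
                simp only [eqToHom_refl, id_comp, assoc]
                erw [← assoc (K.d m (m + 1)), ← assoc (K.d m (m + 1)), ← this]
                simp
              · exact ((isZero_diskX A (by tauto)).eq_of_tgt _ _).symm }
      homEquiv_naturality_left_symm := fun {K' K A} f g => by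
        dsimp
        simp
        exact assoc _ _ _
      homEquiv_naturality_right := fun {K A A'} g k => by
        ext m
        dsimp only [disk]
        simp only [Equiv.coe_fn_mk, HomologicalComplex.comp_f]
        erw [Equiv.coe_fn_mk, Equiv.coe_fn_mk]
        dsimp only
        by_cases h : m = n + 1
        · rw [dif_pos h, dif_pos h, dif_pos (Or.inr h)]
          simp
          erw [assoc g, assoc g, eqToHom_trans_assoc, eqToHom_refl, id_comp]
        · by_cases h' : m = n
          · rw [dif_neg h, dif_pos h', dif_neg h, dif_pos h', dif_pos (Or.inl h')]
            simp
            erw [assoc g, assoc g, eqToHom_trans_assoc, eqToHom_refl, id_comp]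
          · rw [dif_neg h, dif_neg h', dif_neg h, dif_neg h', zero_comp] }

noncomputable instance (n : ℤ) : PreservesFiniteLimits (disk B n) :=
  letI := (evalAdj B n).rightAdjoint_preservesLimits
  inferInstance

noncomputable instance (n : ℤ) : PreservesFiniteColimits (disk B n) :=
  letI := (diskAdj B n).leftAdjoint_preservesColimits
  inferInstance

section MapHC

variable {C₁ : Type*} [Category C₁] [Preadditive C₁] [HasZeroObject C₁]
  {C₂ : Type*} [Category C₂] [Preadditive C₂] [HasZeroObject C₂]

/-- An adjunction between additive functors induces an adjunction between the functors
on categories of homological complexes. -/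
noncomputable def adjMapHC {F : C₁ ⥤ C₂} {G : C₂ ⥤ C₁} (adj : F ⊣ G)
    [F.Additive] [G.Additive] {ι : Type*} (c : ComplexShape ι) :
    F.mapHomologicalComplex c ⊣ G.mapHomologicalComplex c :=
  Adjunction.mkOfHomEquiv
    { homEquiv := fun K L =>
        { toFun := fun φ =>
            { f := fun i => adj.homEquiv _ _ (φ.f i)
              comm' := fun i j _ => by
                change adj.homEquiv _ _ (φ.f i) ≫ G.map (L.d i j) = K.d i j ≫ adj.homEquiv _ _ (φ.f j)
                erw [← Adjunction.homEquiv_naturality_right,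
                  ← Adjunction.homEquiv_naturality_left]
                congr 1
                exact φ.comm i j }
          invFun := fun ψ =>
            { f := fun i => (adj.homEquiv _ _).symm (ψ.f i)
              comm' := fun i j _ => by
                change (adj.homEquiv _ _).symm (ψ.f i) ≫ L.d i j =
                  F.map (K.d i j) ≫ (adj.homEquiv _ _).symm (ψ.f j)
                erw [← Adjunction.homEquiv_naturality_right_symm,
                  ← Adjunction.homEquiv_naturality_left_symm]
                congr 1
                exact ψ.comm i j }
          left_inv := fun φ => by ext i; simp; exact Equiv.symm_apply_apply _ _
          right_inv := fun ψ => by ext i; simp; exact Equiv.apply_symm_apply _ _ }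
      homEquiv_naturality_left_symm := fun f g => by
        ext i
        simp [Adjunction.homEquiv_naturality_left_symm]
        exact adj.homEquiv_naturality_left_symm _ _
      homEquiv_naturality_right := fun f g => by
        ext i
        simp [Adjunction.homEquiv_naturality_right]
        exact adj.homEquiv_naturality_right _ _ }

end MapHC

section Derived

variable {C₁ : Type u₁} [Category.{v₁} C₁] [Abelian C₁]
  {C₂ : Type u₂} [Category.{v₂} C₂] [Abelian C₂]
  [HasDerivedCategory.{w₁} C₁] [HasDerivedCategory.{w₂} C₂]

noncomputable instance catCommSqDer (H : C₁ ⥤ C₂) [H.Additive]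
    [PreservesFiniteLimits H] [PreservesFiniteColimits H] :
    CatCommSq (H.mapHomologicalComplex (ComplexShape.up ℤ)) DerivedCategory.Q
      DerivedCategory.Q H.mapDerivedCategory :=
  ⟨H.mapDerivedCategoryFactors.symm⟩

/-- The derived adjunction induced by an exact adjunction of abelian categories. -/
noncomputable def adjDer {F : C₁ ⥤ C₂} {G : C₂ ⥤ C₁} (adj : F ⊣ G)
    [F.Additive] [G.Additive]
    [PreservesFiniteLimits F] [PreservesFiniteColimits F]
    [PreservesFiniteLimits G] [PreservesFiniteColimits G] :
    F.mapDerivedCategory ⊣ G.mapDerivedCategory :=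
  (adjMapHC adj (ComplexShape.up ℤ)).localization DerivedCategory.Q
    (HomologicalComplex.quasiIso C₁ (ComplexShape.up ℤ)) DerivedCategory.Q
    (HomologicalComplex.quasiIso C₂ (ComplexShape.up ℤ))
    F.mapDerivedCategory G.mapDerivedCategory

/-- Derived functor of an exact functor commutes with the single functors. -/
noncomputable def mapSingleIso (H : C₁ ⥤ C₂) [H.Additive]
    [PreservesFiniteLimits H] [PreservesFiniteColimits H] (X : C₁) :
    H.mapDerivedCategory.obj ((DerivedCategory.singleFunctor C₁ 0).obj X) ≅
      (DerivedCategory.singleFunctor C₂ 0).obj (H.obj X) :=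
  H.mapDerivedCategory.mapIso
      (((SingleFunctors.evaluation _ _ 0).mapIso
        (DerivedCategory.singleFunctorsPostcompQIso C₁)).app X)
    ≪≫ H.mapDerivedCategoryFactors.app ((CochainComplex.singleFunctor C₁ 0).obj X)
    ≪≫ DerivedCategory.Q.mapIso
        ((HomologicalComplex.singleMapHomologicalComplex H (ComplexShape.up ℤ) 0).app X)
    ≪≫ (((SingleFunctors.evaluation _ _ 0).mapIso
        (DerivedCategory.singleFunctorsPostcompQIso C₂)).app (H.obj X)).symm

end Derived

/-- Conjugating a hom group by isomorphisms, as an additive equivalence. -/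
@[simps]
noncomputable def homAddEquivOfIsos {D : Type*} [Category D] [Preadditive D]
    {X X' Y Y' : D} (e : X ≅ X') (f : Y ≅ Y') : (X ⟶ Y) ≃+ (X' ⟶ Y') where
  toFun g := e.inv ≫ g ≫ f.hom
  invFun g := e.hom ≫ g ≫ f.inv
  left_inv g := by simp
  right_inv g := by simp
  map_add' g g' := by simp

/-- The hom equivalence of an adjunction with additive right adjoint, as an additive
equivalence. -/
noncomputable def adjHomAddEquiv {D E : Type*} [Category D] [Category E]
    [Preadditive D] [Preadditive E] {F : D ⥤ E} {G : E ⥤ D} (adj : F ⊣ G)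
    [G.Additive] (X : D) (Y : E) : (F.obj X ⟶ Y) ≃+ (X ⟶ G.obj Y) :=
  { adj.homEquiv X Y with
    map_add' := fun g g' => by simp [Adjunction.homEquiv_unit] }

section ExtAdj

variable {C₁ : Type u₁} [Category.{v₁} C₁] [Abelian C₁]
  {C₂ : Type u₂} [Category.{v₂} C₂] [Abelian C₂]
  [HasDerivedCategory.{w₁} C₁] [HasDerivedCategory.{w₂} C₂]
  [HasExt.{w₁} C₁] [HasExt.{w₂} C₂]

/-- Ext groups along an exact adjunction. -/
noncomputable def extAdjAddEquiv {F : C₁ ⥤ C₂} {G : C₂ ⥤ C₁} (adj : F ⊣ G)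
    [F.Additive] [G.Additive]
    [PreservesFiniteLimits F] [PreservesFiniteColimits F]
    [PreservesFiniteLimits G] [PreservesFiniteColimits G]
    (X : C₁) {Z : C₂} (Y : C₂) (eZ : F.obj X ≅ Z) (i : ℕ) :
    Abelian.Ext Z Y i ≃+ Abelian.Ext X (G.obj Y) i :=
  (Abelian.Ext.homAddEquiv).trans <|
    (homAddEquivOfIsos ((DerivedCategory.singleFunctor C₂ 0).mapIso eZ.symm
        ≪≫ (mapSingleIso F X).symm) (Iso.refl _)).trans <|
    (adjHomAddEquiv (adjDer adj) _ _).trans <|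
    (homAddEquivOfIsos (Iso.refl _)
      ((G.mapDerivedCategory.commShiftIso (i : ℤ)).app _
        ≪≫ (shiftFunctor _ (i : ℤ)).mapIso (mapSingleIso G Y))).trans
    Abelian.Ext.homAddEquiv.symm

end ExtAdj

section DiskIso

variable {n : ℤ} {A : B} {D : CochainComplex B ℤ}
  (e₀ : D.X n ≅ A) (e₁ : D.X (n + 1) ≅ A)
  (hd : D.d n (n + 1) = e₀.hom ≫ e₁.inv)
  (hzero : ∀ m : ℤ, m ≠ n → m ≠ n + 1 → IsZero (D.X m))

/-- The disk complex is isomorphic to any two-term complex of the given shape. -/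
noncomputable def diskObjIso : (disk B n).obj A ≅ D :=
  HomologicalComplex.Hom.isoOfComponents
    (fun m =>
      if h : m = n then
        eqToIso (diskX_eq A (Or.inl h)) ≪≫ e₀.symm ≪≫ eqToIso (show D.X n = D.X m by rw [h])
      else if h' : m = n + 1 then
        eqToIso (diskX_eq A (Or.inr h')) ≪≫ e₁.symm ≪≫
          eqToIso (show D.X (n + 1) = D.X m by rw [h'])
      else (isZero_diskX A (by tauto)).iso (hzero m h h'))
    (by
      intro i j hij
      obtain rfl : j = i + 1 := hij.symm
      dsimp only [disk]
      by_cases h : i = n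
      · subst h
        rw [dif_pos rfl, dif_neg (show ¬ (i + 1 = i) by omega), dif_pos rfl,
          dif_pos ⟨rfl, rfl⟩]
        simp [hd]
      · have hD : D.d i (i + 1) = 0 := by
          by_cases h' : i = n + 1
          · exact (hzero (i + 1) (by omega) (by omega)).eq_of_tgt _ _
          · exact (hzero i h h').eq_of_src _ _
        rw [hD, comp_zero, dif_neg (show ¬ (i = n ∧ i + 1 = n + 1) by omega), zero_comp])

end DiskIso

end DiskProof

/-- Let `B` be an abelian category with enough projectives and all small coproducts,
let `A : B`, `n : ℤ`, and let `D•` be the contractible two-term complex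
`⋯ → 0 → A →(id) A → 0 → ⋯` concentrated in degrees `n` and `n + 1`.  Then for every
complex `B•` in `B` and every `i ≥ 0` there is an isomorphism of abelian groups
`Ext^i_{Ch(B)}(D•, B•) ≅ Ext^i_B(A, Bⁿ)`. -/
theorem ext_from_disk_complex
    {B : Type u} [Category.{v} B] [Abelian B] [EnoughProjectives B]
    [HasCoproducts.{v} B]
    (A : B) (n : ℤ) (D : CochainComplex B ℤ)
    (e₀ : D.X n ≅ A) (e₁ : D.X (n + 1) ≅ A)
    (hd : D.d n (n + 1) = e₀.hom ≫ e₁.inv)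
    (hzero : ∀ m : ℤ, m ≠ n → m ≠ n + 1 → IsZero (D.X m))
    (Bc : CochainComplex B ℤ) (i : ℕ) :
    Nonempty (extType D Bc i ≃+ extType A (Bc.X n) i) := by
  letI : HasDerivedCategory.{max u v} B := HasDerivedCategory.standard B
  letI : HasDerivedCategory.{max u v} (CochainComplex B ℤ) :=
    HasDerivedCategory.standard _
  letI : HasExt.{max u v} B := hasExt_of_hasDerivedCategory B
  letI : HasExt.{max u v} (CochainComplex B ℤ) := hasExt_of_hasDerivedCategory _
  exact ⟨DiskProof.extAdjAddEquiv (DiskProof.diskAdj B n) A Bc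
    (DiskProof.diskObjIso e₀ e₁ hd hzero) i⟩
end

section
/- Let B be an abelian category with enough projective objects, and let B• be an unbounded cochain complex in B with the following property: for every unbounded cochain complex P• of projective objects of B and every integer n, every morphism of complexes P• → B•[n] is chain homotopic to zero. Then the complex B• is acyclic. -/
universe v u

open CategoryTheory Limits

/-- Let `B` be an abelian category with enough projectives, and let `B•` be a complex
in `B` such that, for every complex of projective objects `P•` and every `n : ℤ`, every
morphism of complexes `P• → B•[n]` is chain homotopic to zero (i.e. `B•` is
contraacyclic in the sense of Becker).  Then `B•` is acyclic. -/
theorem acyclic_of_contraacyclic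
    {B : Type u} [Category.{v} B] [Abelian B] [EnoughProjectives B]
    (K : CochainComplex B ℤ)
    (h : ∀ (P : CochainComplex B ℤ), (∀ n : ℤ, Projective (P.X n)) →
      ∀ (n : ℤ) (f : P ⟶ K⟦n⟧), Nonempty (Homotopy f 0)) :
    ∀ n : ℤ, K.ExactAt n := by
  intro n
  rw [HomologicalComplex.exactAt_iff_isZero_homology]
  set H := K.homology n with hH
  suffices hπ : Projective.π H = 0 from IsZero.of_epi_eq_zero _ hπ
  set P := Projective.over H with hPdef
  -- lift the projective cover through the epimorphism `homologyπ`
  set u : P ⟶ K.cycles n := Projective.factorThru (Projective.π H) (K.homologyπ n) with hu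
  have hufac : u ≫ K.homologyπ n = Projective.π H := Projective.factorThru_comp _ _
  set k : P ⟶ K.X n := u ≫ K.iCycles n with hk
  have hkd : ∀ j, k ≫ K.d n j = 0 := fun j => by
    rw [hk, Category.assoc, HomologicalComplex.iCycles_d, comp_zero]
  -- the complex with `P` in every degree and zero differentials
  let Q : CochainComplex B ℤ :=
    { X := fun _ => P
      d := fun _ _ => 0
      shape := fun _ _ _ => rfl
      d_comp_d' := by intros; simp }
  let f : Q ⟶ (K⟦n⟧) :=
    { f := fun i => if hi : i = 0 then k ≫ (K.XIsoOfEq (show n = i + n by omega)).hom else 0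
      comm' := by
        intro i j hij
        by_cases hi : i = 0
        · subst hi
          show _ ≫ _ = (0 : Q.X 0 ⟶ _) ≫ _
          beta_reduce
          erw [dif_pos rfl, zero_comp, CochainComplex.shiftFunctor_obj_d',
            Linear.comp_units_smul, Category.assoc,
            HomologicalComplex.XIsoOfEq_hom_comp_d, hkd]
          exact smul_zero (A := P ⟶ K.X (j + n)) _
        · show _ ≫ _ = (0 : Q.X i ⟶ _) ≫ _
          beta_reduce
          rw [dif_neg hi, zero_comp, zero_comp] }
  obtain ⟨ht⟩ := h Q (fun _ => inferInstance) n f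
  have hcomm := ht.comm 0
  rw [dNext_eq ht.hom (show (ComplexShape.up ℤ).Rel 0 1 by simp),
    prevD_eq ht.hom (show (ComplexShape.up ℤ).Rel (-1) 0 by simp)] at hcomm
  have hQd : Q.d 0 1 = 0 := rfl
  rw [hQd, zero_comp, zero_add] at hcomm
  have hf0 : f.f 0 = k ≫ (K.XIsoOfEq (show n = 0 + n by omega)).hom := by
    dsimp only [f]
    rw [dif_pos rfl]
    rfl
  rw [hf0] at hcomm
  -- now `k` is a boundary
  have hx : k = (n.negOnePow • ht.hom 0 (-1)) ≫ K.d (-1 + n) n := by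
    have h2 := congrArg (fun g => g ≫ (K.XIsoOfEq (show 0 + n = n by omega)).hom) hcomm
    dsimp at h2
    rw [Category.assoc, HomologicalComplex.XIsoOfEq_hom_comp_XIsoOfEq_hom,
      show (K.XIsoOfEq (show n = n from rfl)).hom = 𝟙 _ from rfl, Category.comp_id] at h2
    rw [h2]
    erw [add_zero, Category.assoc, Linear.units_smul_comp, HomologicalComplex.d_comp_XIsoOfEq_hom,
      Linear.comp_units_smul, Linear.units_smul_comp]
    rfl
  have hu0 : u = K.liftCycles k (n+1) (by simp) (hkd _) := by
    rw [← cancel_mono (K.iCycles n), HomologicalComplex.liftCycles_i, hk]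
  have hz := K.liftCycles_homologyπ_eq_zero_of_boundary k (n+1) (by simp)
    (n.negOnePow • ht.hom 0 (-1)) hx
  rw [← hufac, hu0, hz]
end

section
/- Let B be an abelian category with enough projective objects, and let 𝒻 and 𝒞 be classes of objects of B such that Ext^1_B(F, C) = 0 for every F ∈ 𝒻 and C ∈ 𝒞. Let F• be an unbounded acyclic cochain complex in B all of whose terms and all of whose cocycle objects belong to 𝒻, and let C• be an unbounded acyclic cochain complex in B all of whose terms and all of whose cocycle objects belong to 𝒞. Then every morphism of complexes F• → C• is chain homotopic to zero. -/
universe v u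

open CategoryTheory Limits

section Aux

variable {B : Type u} [Category.{v} B] [Abelian B] [EnoughProjectives B]

/-- Lifting along the epimorphism of a short exact sequence whose kernel has
vanishing `Ext¹` with the source. -/
lemma lift_of_extGroup_subsingleton (S : ShortComplex B) (hS : S.ShortExact)
    (A : B) (hext : Subsingleton (extGroup A S.X₁ 1)) (g : A ⟶ S.X₃) :
    ∃ l : A ⟶ S.X₂, l ≫ S.g = g := by
  have := hS.mono_f
  have := hS.epi_g
  obtain ⟨P⟩ := (inferInstance : HasProjectiveResolution A).out
  set K := S.X₁ with hK
  set Q := P.complex.linearYonedaObj ℤ K with hQ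
  have hsub : Subsingleton (Q.homology 1) := by
    have e := ((forget (ModuleCat ℤ)).mapIso (P.isoExt 1 K)).toEquiv
    haveI : Subsingleton
        ((forget (ModuleCat ℤ)).obj (((Ext ℤ B 1).obj (Opposite.op A)).obj K)) := hext
    exact e.symm.subsingleton
  have hexact : Q.ExactAt 1 := by
    rw [Q.exactAt_iff_isZero_homology]
    exact ModuleCat.isZero_of_subsingleton _
  rw [Q.exactAt_iff' 0 1 2 (by simp) (by simp), ShortComplex.moduleCat_exact_iff] at hexact
  have hπ : Epi (P.π.f 0) := inferInstance
  let π0 : P.complex.X 0 ⟶ A := P.π.f 0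
  let a : P.complex.X 0 ⟶ S.X₂ := Projective.factorThru (π0 ≫ g) S.g
  have ha : a ≫ S.g = π0 ≫ g := Projective.factorThru_comp _ _
  have hda : (P.complex.d 1 0 ≫ a) ≫ S.g = 0 := by
    rw [Category.assoc, ha, ← Category.assoc,
      show P.complex.d 1 0 ≫ π0 = 0 from P.complex_d_comp_π_f_zero, zero_comp]
  let φ : P.complex.X 1 ⟶ K := hS.exact.lift (P.complex.d 1 0 ≫ a) hda
  have hφ : φ ≫ S.f = P.complex.d 1 0 ≫ a := hS.exact.lift_f _ _
  have hcocycle : Q.d 1 2 φ = 0 := by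
    show P.complex.d 2 1 ≫ φ = 0
    rw [← cancel_mono S.f, Category.assoc, hφ, zero_comp, ← Category.assoc,
      P.complex.d_comp_d, zero_comp]
  obtain ⟨ψ, hψ⟩ := hexact φ hcocycle
  change P.complex.X 0 ⟶ K at ψ
  have hψ' : P.complex.d 1 0 ≫ ψ = φ := hψ
  let a' : P.complex.X 0 ⟶ S.X₂ := a - ψ ≫ S.f
  have hda' : P.complex.d 1 0 ≫ a' = 0 := by
    simp only [a', Preadditive.comp_sub, ← Category.assoc, hψ', hφ]
    simp [← Category.assoc]
  let S₀ : ShortComplex B := ShortComplex.mk (P.complex.d 1 0) π0 P.complex_d_comp_π_f_zero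
  have hS₀ : S₀.Exact := P.exact₀
  have : Epi S₀.g := hπ
  refine ⟨hS₀.desc a' hda', ?_⟩
  rw [← cancel_epi π0]
  have hdesc : π0 ≫ hS₀.desc a' hda' = a' := hS₀.g_desc a' hda'
  rw [← Category.assoc, hdesc]
  simp [a', ha]

/-- Extension along the monomorphism of a short exact sequence whose cokernel has
vanishing `Ext¹` with the target. -/
lemma extend_of_extGroup_subsingleton (S : ShortComplex B) (hS : S.ShortExact)
    (Y : B) (hext : Subsingleton (extGroup S.X₃ Y 1)) (e : S.X₁ ⟶ Y) :
    ∃ g : S.X₂ ⟶ Y, S.f ≫ g = e := by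
  have := hS.mono_f
  have := hS.epi_g
  have hmono : Mono (pushout.inl e S.f) := inferInstance
  let c' : pushout e S.f ⟶ S.X₃ := pushout.desc 0 S.g (by simp)
  have hinl : pushout.inl e S.f ≫ c' = 0 := pushout.inl_desc _ _ _
  have hinr : pushout.inr e S.f ≫ c' = S.g := pushout.inr_desc _ _ _
  have hepi : Epi c' := by
    have h : Epi (pushout.inr e S.f ≫ c') := by rw [hinr]; infer_instance
    exact epi_of_epi (pushout.inr e S.f) c'
  let T : ShortComplex B := ShortComplex.mk (pushout.inl e S.f) c' hinl
  have hT : T.ShortExact := by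
    refine ShortComplex.ShortExact.mk' ?_ hmono hepi
    refine ShortComplex.exact_of_g_is_cokernel _
      (CokernelCofork.IsColimit.ofπ _ _
        (fun {T'} q hq => hS.exact.desc (pushout.inr e S.f ≫ q)
          (by rw [← Category.assoc, ← pushout.condition, Category.assoc, hq, comp_zero]))
        (fun {T'} q hq => ?_) (fun {T'} q hq m hm => ?_))
    · apply pushout.hom_ext
      · rw [← Category.assoc]
        change (pushout.inl e S.f ≫ c') ≫ _ = _
        rw [hinl, zero_comp, hq]
      · rw [← Category.assoc]
        change (pushout.inr e S.f ≫ c') ≫ _ = _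
        rw [hinr, hS.exact.g_desc]
    · rw [← cancel_epi c', hm]
      apply pushout.hom_ext
      · rw [← Category.assoc]
        change _ = (pushout.inl e S.f ≫ c') ≫ _
        rw [hinl, zero_comp, hq]
      · rw [← Category.assoc]
        change _ = (pushout.inr e S.f ≫ c') ≫ _
        rw [hinr, hS.exact.g_desc]
  obtain ⟨sec, hsec⟩ := lift_of_extGroup_subsingleton T hT S.X₃ hext (𝟙 S.X₃)
  have h1 : (𝟙 (pushout e S.f) - c' ≫ sec) ≫ c' = 0 := by
    rw [Preadditive.sub_comp, Category.id_comp, Category.assoc]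
    change c' - c' ≫ (sec ≫ T.g) = 0
    rw [hsec, Category.comp_id, sub_self]
  have := hT.mono_f
  let r : pushout e S.f ⟶ Y := hT.exact.lift (𝟙 _ - c' ≫ sec) h1
  have hr : r ≫ pushout.inl e S.f = 𝟙 _ - c' ≫ sec := hT.exact.lift_f _ _
  have hretr : pushout.inl e S.f ≫ r = 𝟙 Y := by
    rw [← cancel_mono (pushout.inl e S.f), Category.assoc, hr,
      Preadditive.comp_sub, Category.comp_id, Category.id_comp,
      ← Category.assoc, hinl, zero_comp, sub_zero]
  refine ⟨pushout.inr e S.f ≫ r, ?_⟩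
  rw [← Category.assoc, ← pushout.condition, Category.assoc, hretr, Category.comp_id]

/-- For a cochain complex `K` and `i + 1 = j`, the candidate short exact sequence
`0 → Z_i → K_i → Z_j → 0`. -/
noncomputable def cyclesSES (K : CochainComplex B ℤ) (i j : ℤ) : ShortComplex B :=
  ShortComplex.mk (K.iCycles i) (K.toCycles i j)
    (by rw [← cancel_mono (K.iCycles j), Category.assoc, HomologicalComplex.toCycles_i,
      zero_comp, HomologicalComplex.iCycles_d])

omit [EnoughProjectives B] in
lemma cyclesSES_shortExact (K : CochainComplex B ℤ) (i j : ℤ) (hij : i + 1 = j)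
    (hK : K.ExactAt j) : (cyclesSES K i j).ShortExact := by
  have hrel : (ComplexShape.up ℤ).Rel i j := hij
  have hepi : Epi (K.toCycles i j) := by
    obtain rfl : (ComplexShape.up ℤ).prev j = i := (ComplexShape.up ℤ).prev_eq' hrel
    rw [HomologicalComplex.exactAt_iff] at hK
    have heq : K.toCycles ((ComplexShape.up ℤ).prev j) j = (K.sc j).toCycles := by
      exact (cancel_mono (K.iCycles j)).1
        ((HomologicalComplex.toCycles_i _ _ _).trans ((K.sc j).toCycles_i).symm)
    rw [heq]
    exact hK.epi_toCycles
  refine ShortComplex.ShortExact.mk' ?_ (by dsimp [cyclesSES]; infer_instance) hepi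
  refine ShortComplex.exact_of_f_is_kernel _
    (KernelFork.IsLimit.ofι _ _
      (fun {W} x hx => K.liftCycles x j ((ComplexShape.up ℤ).next_eq' hrel)
        (by change W ⟶ K.X i at x
            have hx' : x ≫ K.toCycles i j = 0 := hx
            rw [← K.toCycles_i i j, ← Category.assoc, hx', zero_comp]))
      (fun {W} x hx => K.liftCycles_i _ _ _ _)
      (fun {W} x hx m hm => by
        change W ⟶ K.X i at x
        change W ⟶ K.cycles i at m
        apply (cancel_mono (K.iCycles i)).1
        rw [K.liftCycles_i]; exact hm))

end Aux

/-- (Gillespie)  Let `B` be an abelian category with enough projectives and `𝓕`, `𝓒`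
classes of objects with `Ext¹(F, C) = 0` for all `F ∈ 𝓕`, `C ∈ 𝓒`.  Let `F•` be an
acyclic complex with all terms and all cocycle objects in `𝓕`, and let `C•` be an
acyclic complex with all terms and all cocycle objects in `𝓒`.  Then every morphism of
complexes `F• → C•` is chain homotopic to zero. -/
theorem homotopic_to_zero_of_acyclic_in_cotorsion_pair_classes
    {B : Type u} [Category.{v} B] [Abelian B] [EnoughProjectives B]
    (𝓕 𝓒 : Set B)
    (horth : ∀ F ∈ 𝓕, ∀ C ∈ 𝓒, Subsingleton (extGroup F C 1))
    (F : CochainComplex B ℤ)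
    (hFmem : ∀ n : ℤ, F.X n ∈ 𝓕) (hFacyc : ∀ n : ℤ, F.ExactAt n)
    (hFcyc : ∀ n : ℤ, F.cycles n ∈ 𝓕)
    (C : CochainComplex B ℤ)
    (hCmem : ∀ n : ℤ, C.X n ∈ 𝓒) (hCacyc : ∀ n : ℤ, C.ExactAt n)
    (hCcyc : ∀ n : ℤ, C.cycles n ∈ 𝓒)
    (f : F ⟶ C) :
    Nonempty (Homotopy f 0) := by
  classical
  have hCses : ∀ j i : ℤ, j + 1 = i → (cyclesSES C j i).ShortExact :=
    fun j i h => cyclesSES_shortExact C j i h (hCacyc i)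
  have hFses : ∀ j i : ℤ, j + 1 = i → (cyclesSES F j i).ShortExact :=
    fun j i h => cyclesSES_shortExact F j i h (hFacyc i)
  -- `ι ≫ toCycles = 0`
  have hιtoF : ∀ i j : ℤ, F.iCycles i ≫ F.toCycles i j = 0 := fun i j => by
    rw [← cancel_mono (F.iCycles j), Category.assoc, F.toCycles_i,
      HomologicalComplex.iCycles_d, zero_comp]
  have hιtoC : ∀ i j : ℤ, C.iCycles i ≫ C.toCycles i j = 0 := fun i j => by
    rw [← cancel_mono (C.iCycles j), Category.assoc, C.toCycles_i,
      HomologicalComplex.iCycles_d, zero_comp]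
  -- Step 1 : lift the maps induced on cocycles
  have hu' : ∀ (j i : ℤ), j + 1 = i → ∃ u : F.cycles i ⟶ C.X j,
      u ≫ C.toCycles j i = HomologicalComplex.cyclesMap f i :=
    fun j i h => lift_of_extGroup_subsingleton (cyclesSES C j i) (hCses j i h) _
      (horth _ (hFcyc i) _ (hCcyc j)) _
  choose u hu using hu'
  -- Step 2 : the map `k n : F.X n ⟶ C.cycles n`
  have hk0 : ∀ n : ℤ, (f.f n - F.toCycles n (n+1) ≫ u n (n+1) rfl) ≫ C.d n (n+1) = 0 := by
    intro n
    have hd : C.d n (n+1) = C.toCycles n (n+1) ≫ C.iCycles (n+1) := (C.toCycles_i _ _).symm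
    have hA : f.f n ≫ C.d n (n+1)
        = F.toCycles n (n+1) ≫ HomologicalComplex.cyclesMap f (n+1) ≫ C.iCycles (n+1) := by
      rw [f.comm n (n+1), ← F.toCycles_i n (n+1), Category.assoc,
        ← HomologicalComplex.cyclesMap_i]
    have hB : (F.toCycles n (n+1) ≫ u n (n+1) rfl) ≫ C.d n (n+1)
        = F.toCycles n (n+1) ≫ HomologicalComplex.cyclesMap f (n+1) ≫ C.iCycles (n+1) := by
      rw [hd, Category.assoc, ← Category.assoc (u n (n+1) rfl), hu]
    rw [Preadditive.sub_comp, hA, hB, sub_self]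
  let k : ∀ n : ℤ, F.X n ⟶ C.cycles n := fun n =>
    C.liftCycles (f.f n - F.toCycles n (n+1) ≫ u n (n+1) rfl) (n+1) (by simp) (hk0 n)
  have hk : ∀ n, k n ≫ C.iCycles n = f.f n - F.toCycles n (n+1) ≫ u n (n+1) rfl :=
    fun n => C.liftCycles_i _ _ _ _
  have hιk : ∀ n, F.iCycles n ≫ k n = HomologicalComplex.cyclesMap f n := fun n => by
    rw [← cancel_mono (C.iCycles n), Category.assoc, hk n, Preadditive.comp_sub,
      ← Category.assoc, hιtoF, zero_comp, sub_zero, HomologicalComplex.cyclesMap_i]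
  -- Step 3 : lift `k`
  have ht' : ∀ (j i : ℤ), j + 1 = i → ∃ t : F.X i ⟶ C.X j, t ≫ C.toCycles j i = k i :=
    fun j i h => lift_of_extGroup_subsingleton (cyclesSES C j i) (hCses j i h) _
      (horth _ (hFmem i) _ (hCcyc j)) (k i)
  choose t ht using ht'
  -- Step 4 : the discrepancy `e` on cocycles
  have he0 : ∀ (j i : ℤ) (h : j + 1 = i),
      (F.iCycles i ≫ t j i h - u j i h) ≫ C.d j i = 0 := by
    intro j i h
    have hd : C.d j i = C.toCycles j i ≫ C.iCycles i := (C.toCycles_i _ _).symm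
    have hA : (F.iCycles i ≫ t j i h) ≫ C.toCycles j i = HomologicalComplex.cyclesMap f i := by
      rw [Category.assoc, ht, hιk]
    rw [hd, ← Category.assoc, Preadditive.sub_comp, hA, hu, sub_self, zero_comp]
  let e : ∀ (j i : ℤ), j + 1 = i → (F.cycles i ⟶ C.cycles j) := fun j i h =>
    C.liftCycles (F.iCycles i ≫ t j i h - u j i h) i ((ComplexShape.up ℤ).next_eq' h)
      (he0 j i h)
  have he : ∀ j i h, e j i h ≫ C.iCycles j = F.iCycles i ≫ t j i h - u j i h :=
    fun j i h => C.liftCycles_i _ _ _ _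
  -- Step 5 : extend `e` along the mono `iCycles`
  have hw' : ∀ (j i : ℤ) (h : j + 1 = i),
      ∃ w : F.X i ⟶ C.cycles j, F.iCycles i ≫ w = e j i h := fun j i h =>
    extend_of_extGroup_subsingleton (cyclesSES F i (i+1)) (hFses i (i+1) rfl) _
      (horth _ (hFcyc (i+1)) _ (hCcyc j)) (e j i h)
  choose w hw using hw'
  -- Step 6 : the homotopy
  let s : ∀ (j i : ℤ), j + 1 = i → (F.X i ⟶ C.X j) := fun j i h =>
    t j i h - w j i h ≫ C.iCycles j
  have hsk : ∀ j i h, s j i h ≫ C.toCycles j i = k i := fun j i h => by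
    show (t j i h - w j i h ≫ C.iCycles j) ≫ C.toCycles j i = k i
    rw [Preadditive.sub_comp, ht, Category.assoc, hιtoC, comp_zero, sub_zero]
  have hιs : ∀ j i h, F.iCycles i ≫ s j i h = u j i h := fun j i h => by
    show F.iCycles i ≫ (t j i h - w j i h ≫ C.iCycles j) = u j i h
    rw [Preadditive.comp_sub, ← Category.assoc, hw, he, sub_sub_cancel]
  refine ⟨{ hom := fun i j =>
              if h : (ComplexShape.up ℤ).Rel j i then s j i h else 0
            zero := fun i j h => dif_neg h
            comm := fun i => ?_ }⟩
  have h1 : (ComplexShape.up ℤ).Rel i (i+1) := rfl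
  have h2 : (ComplexShape.up ℤ).Rel (i-1) i := by simp [ComplexShape.up]
  rw [dNext_eq _ h1, prevD_eq _ h2, dif_pos h1, dif_pos h2]
  have e1 : F.d i (i+1) ≫ s i (i+1) h1 = F.toCycles i (i+1) ≫ u i (i+1) h1 := by
    rw [← F.toCycles_i i (i+1), Category.assoc, hιs i (i+1) h1]
  have e2 : s (i-1) i h2 ≫ C.d (i-1) i = k i ≫ C.iCycles i := by
    rw [show C.d (i-1) i = C.toCycles (i-1) i ≫ C.iCycles i from (C.toCycles_i _ _).symm,
      ← Category.assoc, hsk (i-1) i h2]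
  have hproof : u i (i+1) h1 = u i (i+1) rfl := rfl
  rw [e1, e2, hk i, hproof]
  simp
end

section
/- Let κ be a regular cardinal and let K be a κ-accessible category. Let 𝒯 be a set of κ-presentable objects of K, and let L be an object of K. Then L is the colimit of some κ-filtered diagram in K all of whose values belong to 𝒯 if and only if every morphism S → L from a κ-presentable object S of K factors through some object of 𝒯. -/
universe v u

open CategoryTheory Limits

/-- A category `J` is `κ`-filtered if every diagram in `J` indexed by a small category
with fewer than `κ` arrows admits a cocone. -/
def IsCardinalFiltered (J : Type*) [Category J] (κ : Cardinal.{v}) : Prop :=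
  ∀ (A : Type v) [SmallCategory A], Cardinal.mk (Arrow A) < κ →
    ∀ F : A ⥤ J, Nonempty (Cocone F)

/-- An object `S` of a category `K` is `κ`-presentable if the functor
`Hom_K(S, −) : K → Type` preserves colimits of `κ`-filtered diagrams. -/
def IsCardinalPresentable {K : Type u} [Category.{v} K] (S : K) (κ : Cardinal.{v}) : Prop :=
  ∀ (J : Type v) [SmallCategory J], IsCardinalFiltered J κ →
    ∀ (D : J ⥤ K) (c : Cocone D), IsColimit c →
      Nonempty (IsColimit ((coyoneda.obj (Opposite.op S)).mapCocone c))

/-- An object `L` of `K` is a colimit of a `κ`-filtered diagram all of whose values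
satisfy the predicate `P`. -/
def IsCardinalFilteredColimitOf {K : Type u} [Category.{v} K] (P : K → Prop) (L : K)
    (κ : Cardinal.{v}) : Prop :=
  ∃ (J : Type v) (_ : SmallCategory J) (_ : IsCardinalFiltered J κ) (D : J ⥤ K)
    (c : Cocone D), (∀ j : J, P (D.obj j)) ∧ Nonempty (IsColimit c) ∧ Nonempty (c.pt ≅ L)

/-- A category `K` is `κ`-accessible if it has all colimits of `κ`-filtered diagrams
and there is a set (indexed family) of `κ`-presentable objects such that every object
of `K` is a colimit of a `κ`-filtered diagram with values in this family. -/
def IsCardinalAccessible (K : Type u) [Category.{v} K] (κ : Cardinal.{v}) : Prop :=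
  (∀ (J : Type v) [SmallCategory J], IsCardinalFiltered J κ → HasColimitsOfShape J K) ∧
  ∃ (ι : Type v) (G : ι → K), (∀ s : ι, IsCardinalPresentable (G s) κ) ∧
    ∀ X : K, IsCardinalFilteredColimitOf (fun Y => ∃ s : ι, Nonempty (Y ≅ G s)) X κ

section Helpers

lemma mk_le_mk_arrow (A : Type v) [SmallCategory A] :
    Cardinal.mk A ≤ Cardinal.mk (Arrow A) :=
  Cardinal.mk_le_of_injective (f := fun a => Arrow.mk (𝟙 a))
    (fun a b h => congrArg Comma.left h)

lemma finite_arrow (C : Type*) [Category C] [Finite C] [∀ x y : C, Finite (x ⟶ y)] :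
    Finite (Arrow C) := by
  have hinj : Function.Injective
      (fun f : Arrow C => (⟨f.left, f.right, f.hom⟩ : Σ x y : C, x ⟶ y)) := by
    rintro ⟨a, b, φ⟩ ⟨c, d, ψ⟩ h
    dsimp at h
    injection h with h1 h2
    subst h1
    injection h2 with h3 h4
    subst h3
    cases eq_of_heq h4
    rfl
  exact Finite.of_injective _ hinj

lemma mk_arrow_lt_of_subsingleton {C : Type v} [SmallCategory C]
    (hsub : ∀ x y : C, Subsingleton (x ⟶ y)) {κ : Cardinal.{v}} (hreg : κ.IsRegular)
    (hC : Cardinal.mk C < κ) : Cardinal.mk (Arrow C) < κ := by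
  have hinj : Function.Injective (fun f : Arrow C => (f.left, f.right)) := by
    rintro ⟨a, b, φ⟩ ⟨c, d, ψ⟩ h
    simp only [Prod.mk.injEq] at h
    obtain ⟨rfl, rfl⟩ := h
    cases (hsub a b).elim φ ψ
    rfl
  calc Cardinal.mk (Arrow C) ≤ Cardinal.mk (C × C) := Cardinal.mk_le_of_injective hinj
    _ = Cardinal.mk C * Cardinal.mk C := by simp [Cardinal.mk_prod]
    _ < κ := Cardinal.mul_lt_of_lt hreg.aleph0_le hC hC

lemma mk_arrow_discrete_lt {A : Type v} [SmallCategory A] {κ : Cardinal.{v}}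
    (hreg : κ.IsRegular) (hA : Cardinal.mk (Arrow A) < κ) :
    Cardinal.mk (Arrow (Discrete A)) < κ := by
  apply mk_arrow_lt_of_subsingleton (fun x y => inferInstance) hreg
  calc Cardinal.mk (Discrete A) = Cardinal.mk A := Cardinal.mk_congr discreteEquiv
    _ ≤ Cardinal.mk (Arrow A) := mk_le_mk_arrow A
    _ < κ := hA

end Helpers

section PPC

/-- A small parallel-pair category in `Type v`. -/
def PPC : Type v := ULift Bool

inductive PPHom : PPC.{v} → PPC.{v} → Type v
  | id (b : PPC.{v}) : PPHom b b
  | left : PPHom ⟨false⟩ ⟨true⟩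
  | right : PPHom ⟨false⟩ ⟨true⟩

def PPHom.comp : ∀ {a b c : PPC.{v}}, PPHom a b → PPHom b c → PPHom a c
  | _, _, _, .id _, g => g
  | _, _, _, .left, .id _ => .left
  | _, _, _, .right, .id _ => .right

instance : SmallCategory PPC.{v} where
  Hom := PPHom
  id := PPHom.id
  comp := PPHom.comp
  id_comp _ := rfl
  comp_id f := by cases f <;> rfl
  assoc f g h := by cases f <;> cases g <;> cases h <;> rfl

instance : Finite PPC.{v} := by unfold PPC; infer_instance

instance (x y : PPC.{v}) : Finite (PPHom x y) := by
  apply Finite.of_injective (fun φ : PPHom x y => (match φ with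
    | .id _ => 0 | .left => 1 | .right => 2 : Fin 3))
  intro a b h
  cases a <;> cases b <;> simp_all

/-- The parallel pair functor. -/
def ppFunctor {J : Type*} [Category J] {X Y : J} (f g : X ⟶ Y) : PPC.{v} ⥤ J where
  obj b := match b with
    | ⟨false⟩ => X
    | ⟨true⟩ => Y
  map φ := match φ with
    | .id _ => 𝟙 _
    | .left => f
    | .right => g
  map_id b := rfl
  map_comp {a b c} φ ψ := by
    change PPHom a b at φ
    change PPHom b c at ψ
    cases φ
    · exact (Category.id_comp _).symm
    · cases ψ; exact (Category.comp_id _).symm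
    · cases ψ; exact (Category.comp_id _).symm

end PPC

section StarIdx

/-- The "star" preorder on `Option β`: `none` is below everything,
and distinct `some`s are incomparable. -/
def StarIdx (β : Type v) : Type v := Option β

instance (β : Type v) : Preorder (StarIdx β) where
  le x y := x = none ∨ x = y
  le_refl x := Or.inr rfl
  le_trans x y z f g := by
    rcases f with h | h
    · exact Or.inl h
    · subst h; exact g

instance (β : Type v) (x y : StarIdx β) : Subsingleton (x ⟶ y) := by
  constructor
  intro a b
  apply ULift.ext
  apply Subsingleton.elim

lemma StarIdx.le_def {β : Type v} {x y : StarIdx β} (f : x ⟶ y) : x = none ∨ x = y :=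
  f.down.down

lemma StarIdx.eq_of_some_hom {β : Type v} {b b' : β}
    (f : @Quiver.Hom (StarIdx β) _ (some b) (some b')) : b = b' := by
  obtain h | h := StarIdx.le_def f
  · exact absurd h (by simp)
  · exact Option.some.inj h

lemma StarIdx.not_hom_some_none {β : Type v} {b : β}
    (f : @Quiver.Hom (StarIdx β) _ (some b) none) : False := by
  obtain h | h := StarIdx.le_def f <;> exact absurd h (by simp)

/-- The star-shaped functor out of `StarIdx β`. -/
def starFunctor {β : Type v} {J : Type*} [Category J] (k₀ : J) (k : β → J)
    (w : ∀ b, k₀ ⟶ k b) : StarIdx β ⥤ J where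
  obj x := Option.rec k₀ k x
  map {x y} f :=
    match x, y, f with
    | none, none, _ => 𝟙 k₀
    | none, some b, _ => w b
    | some b, some b', f => eqToHom (congrArg k (StarIdx.eq_of_some_hom f))
    | some b, none, f => (StarIdx.not_hom_some_none f).elim
  map_id x := by cases x <;> simp
  map_comp {x y z} f g := by
    match x, y, z with
    | none, none, none => dsimp; rw [Category.id_comp]
    | none, none, some b => dsimp; rw [Category.id_comp]
    | none, some b, none => exact (StarIdx.not_hom_some_none g).elim
    | none, some b, some b' =>
        obtain rfl := StarIdx.eq_of_some_hom g
        dsimp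
        simp
    | some b, _, none => exact (StarIdx.not_hom_some_none (f ≫ g)).elim
    | some b, none, _ => exact (StarIdx.not_hom_some_none f).elim
    | some b, some b', some b'' =>
        obtain rfl := StarIdx.eq_of_some_hom f
        obtain rfl := StarIdx.eq_of_some_hom g
        dsimp
        simp

end StarIdx

instance (x y : PPC.{v}) : Finite (@Quiver.Hom PPC.{v} _ x y) :=
  inferInstanceAs (Finite (PPHom x y))

section Filtered

variable {J : Type v} [SmallCategory J] {κ : Cardinal.{v}}

lemma mk_arrow_lt_of_finite (C : Type v) [SmallCategory C] [Finite C]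
    [∀ x y : C, Finite (x ⟶ y)] (hreg : κ.IsRegular) : Cardinal.mk (Arrow C) < κ := by
  have : Finite (Arrow C) := finite_arrow C
  exact lt_of_lt_of_le (Cardinal.lt_aleph0_of_finite _) hreg.aleph0_le

lemma isFiltered_of_isCardinalFiltered (hreg : κ.IsRegular)
    (hJ : IsCardinalFiltered J κ) : IsFiltered J := by
  have hne : Nonempty J := by
    have hlt : Cardinal.mk (Arrow (Discrete PEmpty.{v + 1})) < κ := by
      have : IsEmpty (Arrow (Discrete PEmpty.{v + 1})) := ⟨fun f => f.left.as.elim⟩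
      rw [Cardinal.mk_eq_zero]
      exact hreg.pos
    obtain ⟨cc⟩ := hJ _ hlt (Functor.empty J)
    exact ⟨cc.pt⟩
  have hobjs : ∀ X Y : J, ∃ (Z : J) (_ : X ⟶ Z) (_ : Y ⟶ Z), True := by
    intro X Y
    have hlt : Cardinal.mk (Arrow (Discrete (ULift.{v} Bool))) < κ := by
      have : ∀ x y : Discrete (ULift.{v} Bool), Finite (x ⟶ y) := fun x y => inferInstance
      have : Finite (Discrete (ULift.{v} Bool)) := Finite.of_equiv _ discreteEquiv.symm
      exact mk_arrow_lt_of_finite _ hreg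
    obtain ⟨cc⟩ := hJ _ hlt (Discrete.functor (fun b => cond b.down Y X))
    exact ⟨cc.pt, cc.ι.app ⟨⟨false⟩⟩, cc.ι.app ⟨⟨true⟩⟩, trivial⟩
  have hmaps : ∀ ⦃X Y : J⦄ (f g : X ⟶ Y), ∃ (Z : J) (h : Y ⟶ Z), f ≫ h = g ≫ h := by
    intro X Y f g
    have hlt : Cardinal.mk (Arrow PPC.{v}) < κ := mk_arrow_lt_of_finite _ hreg
    obtain ⟨cc⟩ := hJ _ hlt (ppFunctor f g)
    refine ⟨cc.pt, cc.ι.app ⟨true⟩, ?_⟩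
    have h1 := cc.w (PPHom.left)
    have h2 := cc.w (PPHom.right)
    dsimp [ppFunctor] at h1 h2
    rw [h1, h2]
  exact { cocone_objs := hobjs, cocone_maps := hmaps, nonempty := hne }

variable {K : Type u} [Category.{v} K]

/-- Surjectivity part: any map from a presentable object into a filtered colimit
factors through the diagram. -/
lemma factor_through_diagram (hJ : IsCardinalFiltered J κ)
    {D : J ⥤ K} {c : Cocone D} (hc : IsColimit c) {S : K}
    (hS : IsCardinalPresentable S κ) (f : S ⟶ c.pt) :
    ∃ (j : J) (p : S ⟶ D.obj j), p ≫ c.ι.app j = f := by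
  obtain ⟨hmap⟩ := hS J hJ D c hc
  obtain ⟨j, y, hy⟩ := Types.jointly_surjective_of_isColimit hmap f
  exact ⟨j, y, hy⟩

/-- Injectivity part: two maps from a presentable object into a stage of a filtered
colimit which agree in the colimit agree at a later stage. -/
lemma equalized_in_diagram (hreg : κ.IsRegular) (hJ : IsCardinalFiltered J κ)
    {D : J ⥤ K} {c : Cocone D} (hc : IsColimit c) {S : K}
    (hS : IsCardinalPresentable S κ) {j : J} (x y : S ⟶ D.obj j)
    (hxy : x ≫ c.ι.app j = y ≫ c.ι.app j) :
    ∃ (k : J) (u : j ⟶ k), x ≫ D.map u = y ≫ D.map u := by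
  have : IsFiltered J := isFiltered_of_isCardinalFiltered hreg hJ
  obtain ⟨hmap⟩ := hS J hJ D c hc
  have hxy' : ((coyoneda.obj (Opposite.op S)).mapCocone c).ι.app j x =
      ((coyoneda.obj (Opposite.op S)).mapCocone c).ι.app j y := hxy
  rw [Types.FilteredColimit.isColimit_eq_iff _ hmap] at hxy'
  obtain ⟨k, u1, u2, hu⟩ := hxy'
  obtain ⟨k', r, hr⟩ := IsFilteredOrEmpty.cocone_maps u1 u2
  refine ⟨k', u1 ≫ r, ?_⟩
  have hu' : x ≫ D.map u1 = y ≫ D.map u2 := hu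
  rw [D.map_comp, ← Category.assoc, ← Category.assoc, hu', Category.assoc, ← D.map_comp,
    ← hr, D.map_comp, Category.assoc]

lemma isCardinalPresentable_of_iso {S S' : K} (e : S ≅ S')
    (hS : IsCardinalPresentable S κ) : IsCardinalPresentable S' κ := by
  intro J _ hJ D c hc
  obtain ⟨hmap⟩ := hS J hJ D c hc
  exact ⟨IsColimit.mapCoconeEquiv (coyoneda.mapIso e.symm.op) hmap⟩

end Filtered

section FacCat

variable {K : Type u} [Category.{v} K] {J : Type v} [SmallCategory J]

/-- Index category for factorizations: same objects as `J`, with morphisms the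
maps `T j ⟶ T j'` compatible with the maps to `L`. -/
structure FacCat (T : J → K) {L : K} (h : ∀ j, T j ⟶ L) : Type v where
  idx : J

instance facCatCategory (T : J → K) {L : K} (h : ∀ j, T j ⟶ L) :
    SmallCategory (FacCat T h) where
  Hom j j' := { φ : T j.idx ⟶ T j'.idx // φ ≫ h j'.idx = h j.idx }
  id j := ⟨𝟙 (T j.idx), by simp⟩
  comp {a b c} φ ψ := ⟨φ.1 ≫ ψ.1, by rw [Category.assoc, ψ.2, φ.2]⟩
  id_comp φ := by apply Subtype.ext; simp
  comp_id φ := by apply Subtype.ext; simp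
  assoc φ ψ χ := by apply Subtype.ext; simp

/-- Constructor for morphisms in `FacCat`. -/
def facHomMk (T : J → K) {L : K} (h : ∀ j, T j ⟶ L) {j j' : J} (φ : T j ⟶ T j')
    (w : φ ≫ h j' = h j) : FacCat.mk (T := T) (h := h) j ⟶ FacCat.mk j' :=
  ⟨φ, w⟩

@[simp] lemma facCat_id_val (T : J → K) {L : K} (h : ∀ j, T j ⟶ L)
    (a : FacCat T h) : (𝟙 a : a ⟶ a).1 = 𝟙 (T a.idx) := rfl

@[simp] lemma facCat_comp_val (T : J → K) {L : K} (h : ∀ j, T j ⟶ L)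
    {a b c : FacCat T h} (φ : a ⟶ b) (ψ : b ⟶ c) :
    (φ ≫ ψ).1 = φ.1 ≫ ψ.1 := rfl

/-- The tautological diagram of the factorization category. -/
def facDiag (T : J → K) {L : K} (h : ∀ j, T j ⟶ L) : FacCat T h ⥤ K where
  obj j := T j.idx
  map φ := φ.1
  map_id _ := rfl
  map_comp _ _ := rfl

/-- The tautological cocone over `facDiag` with apex `L`. -/
def facCocone (T : J → K) {L : K} (h : ∀ j, T j ⟶ L) : Cocone (facDiag T h) where
  pt := L
  ι := { app := fun j => h j.idx
         naturality := fun j j' φ => by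
           dsimp [facDiag]
           rw [φ.2, Category.comp_id] }

variable {κ : Cardinal.{v}}

theorem facCat_isCardinalFiltered (hreg : κ.IsRegular)
    (hJ : IsCardinalFiltered J κ) {D : J ⥤ K} {c : Cocone D} (hc : IsColimit c)
    (T : J → K) (t : ∀ j, D.obj j ⟶ T j) (h : ∀ j, T j ⟶ c.pt)
    (hT : ∀ j, IsCardinalPresentable (T j) κ)
    (hth : ∀ j, t j ≫ h j = c.ι.app j) :
    IsCardinalFiltered (FacCat T h) κ := by
  intro A instA hA F
  -- regard `F` also as diagram in `J`
  let FJ : A → J := fun a => (F.obj a).idx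
  -- Step 1: factor each `h (FJ a)` through the diagram `D`
  have step1 : ∀ a : A, ∃ (k : J) (p : T (FJ a) ⟶ D.obj k), p ≫ c.ι.app k = h (FJ a) :=
    fun a => factor_through_diagram hJ hc (hT (FJ a)) (h (FJ a))
  choose k p hp using step1
  -- Step 2: an upper bound `k₀` for all the `k a`
  obtain ⟨cc⟩ := hJ (Discrete A) (mk_arrow_discrete_lt hreg hA) (Discrete.functor k)
  set k₀ : J := cc.pt with hk₀
  let q : ∀ a : A, T (FJ a) ⟶ D.obj k₀ := fun a => p a ≫ D.map (cc.ι.app ⟨a⟩)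
  have hq : ∀ a : A, q a ≫ c.ι.app k₀ = h (FJ a) := by
    intro a
    dsimp [q]
    rw [Category.assoc, c.w, hp]
  -- Step 3: equalize, for every arrow of `A`, the two induced maps into `D.obj k₀`
  have step3 : ∀ φ : Arrow A, ∃ (k' : J) (u : k₀ ⟶ k'),
      q φ.left ≫ D.map u = ((F.map φ.hom).1 ≫ q φ.right) ≫ D.map u := by
    intro φ
    apply equalized_in_diagram hreg hJ hc (hT (FJ φ.left))
    rw [hq, Category.assoc, hq]
    exact ((F.map φ.hom).2).symm
  choose k' u' hu' using step3
  -- Step 4: a cocone over the star diagram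
  have hstar : Cardinal.mk (Arrow (StarIdx (Arrow A))) < κ := by
    apply mk_arrow_lt_of_subsingleton (fun x y => inferInstance) hreg
    have : Cardinal.mk (StarIdx (Arrow A)) = Cardinal.mk (Arrow A) + 1 :=
      Cardinal.mk_option
    rw [this]
    exact Cardinal.add_lt_of_lt hreg.aleph0_le hA
      (lt_of_lt_of_le Cardinal.one_lt_aleph0 hreg.aleph0_le)
  obtain ⟨dd⟩ := hJ (StarIdx (Arrow A)) hstar (starFunctor k₀ k' u')
  set k₁ : J := dd.pt with hk₁
  let w : k₀ ⟶ k₁ := dd.ι.app none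
  have hw : ∀ φ : Arrow A, u' φ ≫ dd.ι.app (some φ) = w := by
    intro φ
    have := dd.w (homOfLE (Or.inl rfl : (none : StarIdx (Arrow A)) = none ∨
      (none : StarIdx (Arrow A)) = some φ))
    exact this
  -- assemble the cocone of `F`
  refine ⟨⟨FacCat.mk k₁, ⟨fun a => ⟨q a ≫ D.map w ≫ t k₁, ?_⟩, ?_⟩⟩⟩
  · simp only [Functor.const_obj_obj, Category.assoc]
    rw [hth, c.w]
    exact hq a
  · intro a a' α
    simp only [Functor.const_obj_map]
    apply Subtype.ext
    rw [facCat_comp_val, facCat_comp_val, facCat_id_val]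
    dsimp
    rw [Category.comp_id]
    have h1 := hu' (Arrow.mk α)
    dsimp at h1 ⊢
    rw [← hw (Arrow.mk α)]
    erw [D.map_comp]
    simp only [← Category.assoc]
    erw [← h1]
end FacCat

section FacColimit

variable {K : Type u} [Category.{v} K] {J : Type v} [SmallCategory J]
variable {κ : Cardinal.{v}}

noncomputable def facCocone_isColimit (hreg : κ.IsRegular)
    (hJ : IsCardinalFiltered J κ) {D : J ⥤ K} {c : Cocone D} (hc : IsColimit c)
    (hD : ∀ j, IsCardinalPresentable (D.obj j) κ)
    (T : J → K) (t : ∀ j, D.obj j ⟶ T j) (h : ∀ j, T j ⟶ c.pt)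
    (hT : ∀ j, IsCardinalPresentable (T j) κ)
    (hth : ∀ j, t j ≫ h j = c.ι.app j) :
    IsColimit (facCocone T h) := by
  have : IsFiltered J := isFiltered_of_isCardinalFiltered hreg hJ
  -- naturality of the family `t j ≫ s.ι.app ⟨j⟩` for any cocone `s` over `facDiag T h`
  have nat : ∀ (s : Cocone (facDiag T h)) {j j' : J} (u : j ⟶ j'),
      D.map u ≫ (t j' ≫ s.ι.app (FacCat.mk j')) = t j ≫ s.ι.app (FacCat.mk j) := by
    intro s j j' u
    obtain ⟨k, pk, hpk⟩ := factor_through_diagram hJ hc (hT j) (h j)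
    obtain ⟨k', pk', hpk'⟩ := factor_through_diagram hJ hc (hT j') (h j')
    obtain ⟨k₃, wl, hwl⟩ := equalized_in_diagram hreg hJ hc (hD j)
      (t j ≫ pk ≫ D.map (IsFiltered.leftToMax k k'))
      (D.map u ≫ t j' ≫ pk' ≫ D.map (IsFiltered.rightToMax k k'))
      (by
        simp only [Category.assoc]
        rw [c.w, hpk, c.w, hpk', hth, hth, c.w])
    have hφ : (pk ≫ D.map (IsFiltered.leftToMax k k') ≫ D.map wl ≫ t k₃) ≫ h k₃ = h j := by
      simp only [Category.assoc]
      rw [hth, c.w, c.w, hpk]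
    have hψ : (pk' ≫ D.map (IsFiltered.rightToMax k k') ≫ D.map wl ≫ t k₃) ≫ h k₃ = h j' := by
      simp only [Category.assoc]
      rw [hth, c.w, c.w, hpk']
    have hsφ := s.w (facHomMk T h _ hφ)
    have hsψ := s.w (facHomMk T h _ hψ)
    dsimp [facDiag, facHomMk] at hsφ hsψ
    have h2 := congrArg (fun x : D.obj j ⟶ D.obj k₃ => x ≫ (t k₃ ≫ s.ι.app (FacCat.mk k₃))) hwl
    dsimp at h2
    simp only [Category.assoc] at hsφ hsψ h2 ⊢
    rw [← hsφ, ← hsψ]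
    exact h2.symm
  -- the associated cocone over `D`
  let es : ∀ s : Cocone (facDiag T h), Cocone D := fun s =>
    { pt := s.pt
      ι := { app := fun j => t j ≫ s.ι.app (FacCat.mk j)
             naturality := fun j j' u => by
               dsimp
               rw [Category.comp_id]
               exact nat s u } }
  refine { desc := fun s => hc.desc (es s), fac := ?_, uniq := ?_ }
  · rintro s ⟨j⟩
    obtain ⟨k, pk, hpk⟩ := factor_through_diagram hJ hc (hT j) (h j)
    have hχ : (pk ≫ t k) ≫ h k = h j := by
      rw [Category.assoc, hth, hpk]
    have hsχ := s.w (facHomMk T h _ hχ)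
    dsimp [facDiag, facHomMk] at hsχ
    have h0 : (facCocone T h).ι.app (FacCat.mk j) = h j := rfl
    rw [h0, ← hpk]
    erw [Category.assoc, hc.fac (es s) k]
    have h1 : (es s).ι.app k = t k ≫ s.ι.app (FacCat.mk k) := rfl
    rw [h1, ← hsχ]
    simp only [Category.assoc]
    rfl
  · intro s m hm
    apply hc.uniq (es s)
    intro j
    have hmj : h j ≫ m = s.ι.app (FacCat.mk j) := hm (FacCat.mk j)
    have h1 : (es s).ι.app j = t j ≫ s.ι.app (FacCat.mk j) := rfl
    rw [h1, ← hth]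
    erw [Category.assoc, hmj]

end FacColimit

/-- Let `κ` be a regular cardinal, `K` a `κ`-accessible category, `𝒯` a set of
`κ`-presentable objects of `K`, and `L` an object of `K`.  Then `L` is a colimit of a
`κ`-filtered diagram with values in `𝒯` if and only if every morphism `S → L` from a
`κ`-presentable object `S` factors through some object of `𝒯`. -/
theorem cardinalFilteredColimitOf_iff_factorization
    (κ : Cardinal.{v}) (hreg : κ.IsRegular)
    {K : Type u} [Category.{v} K] (hacc : IsCardinalAccessible K κ)
    (𝒯 : Set K) (h𝒯 : ∀ T ∈ 𝒯, IsCardinalPresentable T κ)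
    (L : K) :
    IsCardinalFilteredColimitOf (fun Y => Y ∈ 𝒯) L κ ↔
      ∀ (S : K), IsCardinalPresentable S κ → ∀ f : S ⟶ L,
        ∃ (T : K) (_ : T ∈ 𝒯) (g : S ⟶ T) (h : T ⟶ L), g ≫ h = f := by
  constructor
  · rintro ⟨J, instJ, hfil, D, c, hvals, ⟨hc⟩, ⟨e⟩⟩ S hS f
    obtain ⟨j, p, hp⟩ := factor_through_diagram hfil hc hS (f ≫ e.inv)
    refine ⟨D.obj j, hvals j, p, c.ι.app j ≫ e.hom, ?_⟩
    rw [← Category.assoc, hp, Category.assoc, e.inv_hom_id, Category.comp_id]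
  · intro hf
    obtain ⟨hcolims, ι, G, hGpres, hGen⟩ := hacc
    obtain ⟨J, instJ, hfil, D, c, hvals, ⟨hc⟩, ⟨e⟩⟩ := hGen L
    let c' : Cocone D := c.extend e.hom
    have hc' : IsColimit c' := hc.ofIsoColimit (Cocones.ext e (fun j => by
      simp [c', Cocone.extend]))
    have hD : ∀ j, IsCardinalPresentable (D.obj j) κ := by
      intro j
      obtain ⟨s, ⟨es⟩⟩ := hvals j
      exact isCardinalPresentable_of_iso es.symm (hGpres s)
    have hfac : ∀ j, ∃ (T : K) (_ : T ∈ 𝒯) (g : D.obj j ⟶ T) (hh : T ⟶ L),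
        g ≫ hh = c'.ι.app j := fun j => hf (D.obj j) (hD j) (c'.ι.app j)
    choose T hT t h' hth using hfac
    have hTpres : ∀ j, IsCardinalPresentable (T j) κ := fun j => h𝒯 _ (hT j)
    exact ⟨FacCat T h', inferInstance,
      facCat_isCardinalFiltered hreg hfil hc' T t h' hTpres hth,
      facDiag T h', facCocone T h', fun j => hT j.idx,
      ⟨facCocone_isColimit hreg hfil hc' hD T t h' hTpres hth⟩, ⟨Iso.refl L⟩⟩
end
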